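/- arXiv:1705.04431 — 8 statements merged into one kernel-verified Lean document; each statement's English description precedes it below -/
import Mathlib

section
/- Let E be a real Banach space, let L : E → E be a bounded linear operator, and let 𝒮 : E → ℝ be a bounded linear functional satisfying 𝒮(Lφ) = 𝒮(φ) for all φ ∈ E. Assume there exist C₀ > 0 and θ ∈ (0,1) such that ‖Lⁿφ‖ ≤ C₀ θⁿ ‖φ‖ for every n ∈ ℕ and every φ ∈ E with 𝒮φ = 0. Let u ∈ E with 𝒮u = 1, and let ρ ∈ E satisfy Lρ = ρ and 𝒮ρ = 1, so that K : φ ↦ φ − Lφ + (𝒮φ)·u is a bounded bijection of E with bounded inverse S. Then for every φ ∈ E the series Σ_{n=0}^∞ Lⁿ(φ + (𝒮φ)(Lu − 2u)) converges in E and S φ = (𝒮φ)·u + Σ_{n=0}^∞ Lⁿ(φ + (𝒮φ)(Lu − 2u)). -/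
/-!
The operator `K = id - L + u 𝒮` is inverted through the Neumann series of `L` only on `ker 𝒮`,
so `φ` is first corrected to `ψ = φ + (𝒮 φ) (L u - 2 u)`, which has `𝒮 ψ = 0`. There the powers
of `L` decay geometrically, so `T = ∑ Lⁿ ψ` converges, solves `T - L T = ψ` and, since `𝒮` is
`L`-invariant, lies in `ker 𝒮`. Then `K (𝒮 φ • u + T) = φ`, whence `S φ = 𝒮 φ • u + T`.
-/

namespace ContinuousLinearMap

theorem map_pow_apply_of_map_apply_eq {R E F : Type*} [Semiring R] [AddCommMonoid E] [Module R E]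
    [TopologicalSpace E] [AddCommMonoid F] [Module R F] [TopologicalSpace F]
    (L : E →L[R] E) (𝒮 : E →L[R] F) (h𝒮L : ∀ x, 𝒮 (L x) = 𝒮 x) (n : ℕ) (x : E) :
    𝒮 ((L ^ n) x) = 𝒮 x := by
  induction n with
  | zero => rfl
  | succ n ih => rw [pow_succ', mul_apply_eq_comp, h𝒮L, ih]

theorem sub_apply_eq_of_hasSum_pow_apply {R E : Type*} [Semiring R] [AddCommGroup E] [Module R E]
    [TopologicalSpace E] [IsTopologicalAddGroup E] [T2Space E] (L : E →L[R] E) {ψ T : E}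
    (hT : HasSum (fun n : ℕ => (L ^ n) ψ) T) : T - L T = ψ := by
  have hshift : HasSum (fun n : ℕ => (L ^ (n + 1)) ψ) (T - ψ) := by
    simpa using (hasSum_nat_add_iff' (f := fun n : ℕ => (L ^ n) ψ) 1).mpr hT
  have hL : HasSum (fun n : ℕ => (L ^ (n + 1)) ψ) (L T) := by
    simpa only [pow_succ', mul_apply_eq_comp] using L.hasSum hT
  rw [hL.unique hshift, sub_sub_cancel]

theorem summable_pow_apply_of_norm_le_geometric {𝕜 E : Type*} [NontriviallyNormedField 𝕜]
    [NormedAddCommGroup E] [NormedSpace 𝕜 E] [CompleteSpace E] (L : E →L[𝕜] E) {ψ : E}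
    {C θ : ℝ} (hθ0 : 0 ≤ θ) (hθ1 : θ < 1) (hdecay : ∀ n : ℕ, ‖(L ^ n) ψ‖ ≤ C * θ ^ n * ‖ψ‖) :
    Summable (fun n : ℕ => (L ^ n) ψ) :=
  Summable.of_norm_bounded ((summable_geometric_of_lt_one hθ0 hθ1).mul_left (C * ‖ψ‖))
    fun n => (hdecay n).trans_eq (by ring)

end ContinuousLinearMap

theorem solution_operator_series_representation_general
    {E : Type*} [NormedAddCommGroup E] [NormedSpace ℝ E] [CompleteSpace E]
    (L : E →L[ℝ] E) (𝒮 : E →L[ℝ] ℝ)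
    (h𝒮L : ∀ φ : E, 𝒮 (L φ) = 𝒮 φ)
    (C₀ θ : ℝ) (hθ0 : 0 < θ) (hθ1 : θ < 1)
    (hdecay : ∀ (n : ℕ) (φ : E), 𝒮 φ = 0 → ‖(L ^ n) φ‖ ≤ C₀ * θ ^ n * ‖φ‖)
    (u : E) (hu : 𝒮 u = 1)
    (S : E →L[ℝ] E)
    (hS1 : ∀ φ : E, S (φ - L φ + 𝒮 φ • u) = φ) :
    ∀ φ : E,
      HasSum (fun n : ℕ => (L ^ n) (φ + 𝒮 φ • (L u - (2 : ℝ) • u))) (S φ - 𝒮 φ • u) := by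
  intro φ
  set ψ := φ + 𝒮 φ • (L u - (2 : ℝ) • u) with hψ
  have h𝒮ψ : 𝒮 ψ = 0 := by
    simp only [hψ, map_add, map_smul, map_sub, h𝒮L, hu, smul_eq_mul]
    ring
  obtain ⟨T, hT⟩ := L.summable_pow_apply_of_norm_le_geometric hθ0.le hθ1
    fun n => hdecay n ψ h𝒮ψ
  have hLT : L T = T - ψ := by rw [← L.sub_apply_eq_of_hasSum_pow_apply hT, sub_sub_cancel]
  have h𝒮T : 𝒮 T = 0 := by
    refine (𝒮.hasSum hT).unique ?_
    simpa only [L.map_pow_apply_of_map_apply_eq 𝒮 h𝒮L, h𝒮ψ] using hasSum_zero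
  have hK : (𝒮 φ • u + T) - L (𝒮 φ • u + T) + 𝒮 (𝒮 φ • u + T) • u = φ := by
    rw [map_add, map_smul, map_add, map_smul, h𝒮T, hu, hLT, hψ]
    simp only [smul_eq_mul, mul_one]
    module
  have hSφ : S φ = 𝒮 φ • u + T := by rw [← hS1 (𝒮 φ • u + T), hK]
  rwa [hSφ, add_sub_cancel_left]

/-- With the solution operator `S` (two-sided bounded inverse of
`K : φ ↦ φ - L φ + (𝒮 φ) • u`), for every `φ ∈ E` the series
`∑ₙ Lⁿ (φ + (𝒮 φ) • (L u - 2 u))` converges in `E` and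
`S φ = (𝒮 φ) • u + ∑ₙ Lⁿ (φ + (𝒮 φ) • (L u - 2 u))`. -/
theorem solution_operator_series_representation
    {E : Type*} [NormedAddCommGroup E] [NormedSpace ℝ E] [CompleteSpace E]
    (L : E →L[ℝ] E) (𝒮 : E →L[ℝ] ℝ)
    (h𝒮L : ∀ φ : E, 𝒮 (L φ) = 𝒮 φ)
    (C₀ θ : ℝ) (hC₀ : 0 < C₀) (hθ0 : 0 < θ) (hθ1 : θ < 1)
    (hdecay : ∀ (n : ℕ) (φ : E), 𝒮 φ = 0 → ‖(L ^ n) φ‖ ≤ C₀ * θ ^ n * ‖φ‖)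
    (u : E) (hu : 𝒮 u = 1)
    (ρ : E) (hρ : L ρ = ρ) (hρ𝒮 : 𝒮 ρ = 1)
    (S : E →L[ℝ] E)
    (hS1 : ∀ φ : E, S (φ - L φ + 𝒮 φ • u) = φ)
    (hS2 : ∀ φ : E, S φ - L (S φ) + 𝒮 (S φ) • u = φ) :
    ∀ φ : E,
      HasSum (fun n : ℕ => (L ^ n) (φ + 𝒮 φ • (L u - (2 : ℝ) • u))) (S φ - 𝒮 φ • u) :=
  solution_operator_series_representation_general L 𝒮 h𝒮L C₀ θ hθ0 hθ1 hdecay u hu S hS1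
end

section
/- Let β be a positive integer and r a positive integer. Let v : ℝ → ℝ be C^{r+1} with v' (2πβ)-periodic and v(2πβ) − v(0) ∈ 2πℤ, and let h : ℝ → ℂ be a (2πβ)-periodic C^r function. Set μ₂ = min_{x} v'(x) and μ₁ = max_{x} v'(x). Assume for each n = 1,…,r that sup_x |v^{(n+1)}(x)| ≤ Υ_n < ∞ and |h^{(n)}(x)| ≤ H_n·|h(x)| for all x. For j,k ∈ ℤ define M_{jk} = (1/2π) ∫₀^{2πβ} h(x) e^{i(k v(x) − j x)} dx. Then there exist constants W_{r,0},…,W_{r,r} ≥ 0, depending only on r, Υ₁,…,Υ_r and H₁,…,H_r, such that for all j,k ∈ ℤ with j ∉ k·[μ₂,μ₁]: |M_{jk}| ≤ (‖h‖_{L¹[0,2πβ]} / 2π) · Σ_{n=0}^{r} W_{r,n} |k|ⁿ / d(j, k[μ₂,μ₁])^{n+r}, where d(j, k[μ₂,μ₁]) := min_{t ∈ [μ₂,μ₁]} |j − k t|. -/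
/-!
Write `E x = exp (i (k v x - j x))`. Then `E' = w E` with `w = i (k v' - j)`, and `|w| ≥ d`, the
distance from `j` to `k [μ₂, μ₁]`. Integrating by parts `r` times over a period, with no boundary
terms thanks to periodicity, replaces `h` by `Lʳ h`, where `L g = -(g / w)'`. By the Leibniz rule
the `p`-th derivative of `1 / w` is `O(d⁻¹ (1 + |k| Υ / d) ^ p)`, hence
`|Lʳ h| = O(d⁻ʳ (1 + |k| Υ / d) ^ r) |h|` pointwise, and the binomial expansion of
`(1 + |k| Υ / d) ^ r` gives the sum `Σ Wₙ |k|ⁿ / d ^ (n + r)`.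
-/

open Complex Finset

def IteratedDerivBound {F : Type*} [NormedAddCommGroup F] [NormedSpace ℝ F]
    (N : ℕ) (t : ℝ) (ρ : ℝ → ℝ) (f : ℝ → F) : Prop :=
  ∀ p ≤ N, ∀ x, ‖iteratedDeriv p f x‖ ≤ t ^ p * ρ x

namespace IteratedDerivBound

variable {F : Type*} [NormedAddCommGroup F] [NormedSpace ℝ F]
  {N : ℕ} {t : ℝ} {ρ σ : ℝ → ℝ} {f : ℝ → F}

lemma nonneg (hf : IteratedDerivBound N t ρ f) (x : ℝ) : 0 ≤ ρ x := by
  simpa using (norm_nonneg _).trans (hf 0 N.zero_le x)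

lemma mono (hf : IteratedDerivBound N t ρ f) (ht : 0 ≤ t) (hρσ : ∀ x, ρ x ≤ σ x) :
    IteratedDerivBound N t σ f :=
  fun p hp x => (hf p hp x).trans (mul_le_mul_of_nonneg_left (hρσ x) (pow_nonneg ht p))

lemma of_le {M : ℕ} (hf : IteratedDerivBound N t ρ f) (hMN : M ≤ N) :
    IteratedDerivBound M t ρ f :=
  fun p hp => hf p (hp.trans hMN)

lemma neg (hf : IteratedDerivBound N t ρ f) : IteratedDerivBound N t ρ (-f) := fun p hp x => by
  simpa only [iteratedDeriv_neg, norm_neg] using hf p hp x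

protected lemma deriv (hf : IteratedDerivBound (N + 1) t ρ f) :
    IteratedDerivBound N t (fun x => t * ρ x) (deriv f) := fun p hp x => by
  rw [← iteratedDeriv_succ', ← mul_assoc, ← pow_succ]
  exact hf (p + 1) (by omega) x

lemma mul {𝔸 : Type*} [NormedRing 𝔸] [NormedAlgebra ℝ 𝔸] {f g : ℝ → 𝔸}
    (hf : IteratedDerivBound N t ρ f) (hg : IteratedDerivBound N t σ g) (ht : 0 ≤ t)
    (hf' : ContDiff ℝ N f) (hg' : ContDiff ℝ N g) :
    IteratedDerivBound N t (fun x => 2 ^ N * (ρ x * σ x)) (f * g) := fun p hp x => by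
  have hρσ : 0 ≤ t ^ p * (ρ x * σ x) :=
    mul_nonneg (pow_nonneg ht p) (mul_nonneg (hf.nonneg x) (hg.nonneg x))
  have hterm : ∀ i ≤ p,
      ‖iteratedDeriv i f x‖ * ‖iteratedDeriv (p - i) g x‖ ≤ t ^ p * (ρ x * σ x) := by
    intro i hi
    calc ‖iteratedDeriv i f x‖ * ‖iteratedDeriv (p - i) g x‖
        ≤ (t ^ i * ρ x) * (t ^ (p - i) * σ x) :=
          mul_le_mul (hf i (by omega) x) (hg (p - i) (by omega) x) (norm_nonneg _)
            ((norm_nonneg _).trans (hf i (by omega) x))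
      _ = t ^ (i + (p - i)) * (ρ x * σ x) := by ring
      _ = t ^ p * (ρ x * σ x) := by rw [Nat.add_sub_cancel' hi]
  calc ‖iteratedDeriv p (fun y => f y * g y) x‖
      ≤ ∑ i ∈ range (p + 1),
          (p.choose i : ℝ) * ‖iteratedDeriv i f x‖ * ‖iteratedDeriv (p - i) g x‖ := by
        simpa only [← norm_iteratedFDeriv_eq_norm_iteratedDeriv] using
          norm_iteratedFDeriv_mul_le hf' hg' x (by exact_mod_cast hp)
    _ ≤ ∑ i ∈ range (p + 1), (p.choose i : ℝ) * (t ^ p * (ρ x * σ x)) :=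
        sum_le_sum fun i hi => by
          rw [mul_assoc]
          exact mul_le_mul_of_nonneg_left (hterm i (Nat.lt_succ_iff.mp (mem_range.mp hi)))
            (Nat.cast_nonneg _)
    _ = 2 ^ p * (t ^ p * (ρ x * σ x)) := by
        rw [← sum_mul, ← Nat.cast_sum, Nat.sum_range_choose, Nat.cast_pow, Nat.cast_ofNat]
    _ ≤ 2 ^ N * (t ^ p * (ρ x * σ x)) :=
        mul_le_mul_of_nonneg_right (pow_le_pow_right₀ one_le_two hp) hρσ
    _ = t ^ p * (2 ^ N * (ρ x * σ x)) := by ring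

end IteratedDerivBound

-- From `(w⁻¹)' = -w' w⁻²`: two Leibniz expansions of `w' w⁻¹ w⁻¹`, each costing `2 ^ N`.
def invDerivConst : ℕ → ℝ
  | 0 => 1
  | N + 1 => 4 ^ N * invDerivConst N ^ 2

lemma one_le_invDerivConst (N : ℕ) : 1 ≤ invDerivConst N := by
  induction N with
  | zero => exact le_rfl
  | succ N ih => exact one_le_mul_of_one_le_of_one_le (one_le_pow₀ (by norm_num)) (one_le_pow₀ ih)

theorem IteratedDerivBound.inv {𝕜 : Type*} [NontriviallyNormedField 𝕜] [NormedAlgebra ℝ 𝕜]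
    {N : ℕ} {w : ℝ → 𝕜} {δ κ : ℝ} (hδ : 0 < δ) (hκ : 0 ≤ κ) (hw : ContDiff ℝ N w)
    (hwδ : ∀ x, δ ≤ ‖w x‖) (hdw : ∀ m < N, ∀ x, ‖iteratedDeriv (m + 1) w x‖ ≤ κ) :
    IteratedDerivBound N (1 + κ / δ) (fun _ => invDerivConst N / δ) w⁻¹ := by
  set t := 1 + κ / δ
  have hκδ : κ / δ ≤ t := le_add_of_nonneg_left zero_le_one
  have ht : 1 ≤ t := le_add_of_nonneg_right (div_nonneg hκ hδ.le)
  have hw0 : ∀ x, w x ≠ 0 := fun x hx => by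
    have := hwδ x
    rw [hx, norm_zero] at this
    linarith
  induction N with
  | zero =>
    intro p hp x
    obtain rfl : p = 0 := by omega
    simpa [invDerivConst, norm_inv] using inv_anti₀ hδ (hwδ x)
  | succ N ih =>
    set c := invDerivConst N
    have hwN : ContDiff ℝ N w := hw.of_le (by exact_mod_cast N.le_succ)
    have hinvN : IteratedDerivBound N t (fun _ => c / δ) w⁻¹ :=
      ih hwN fun m hm => hdw m (by omega)
    have hdwN : IteratedDerivBound N t (fun _ => κ) (deriv w) := fun p hp x => by
      rw [← iteratedDeriv_succ']
      exact (hdw p (by omega) x).trans (le_mul_of_one_le_left hκ (one_le_pow₀ ht))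
    have hderiv : deriv w⁻¹ = -(deriv w * (w⁻¹ * w⁻¹)) := funext fun x => by
      rw [(((hw.differentiable (by simp)) x).hasDerivAt.inv (hw0 x)).deriv]
      simp only [Pi.neg_apply, Pi.mul_apply, Pi.inv_apply]
      field_simp
    have htop : IteratedDerivBound N t
        (fun _ => 2 ^ N * (κ * (2 ^ N * (c / δ * (c / δ))))) (deriv w⁻¹) := by
      have hinvC : ContDiff ℝ N w⁻¹ := hwN.inv hw0
      rw [hderiv]
      exact (hdwN.mul (hinvN.mul hinvN (by linarith) hinvC hinvC) (by linarith)
        (ContDiff.deriv' (by exact_mod_cast hw)) (hinvC.mul hinvC)).neg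
    intro p hp x
    rcases (show p ≤ N ∨ p = N + 1 by omega) with hp | rfl
    · refine (hinvN.mono (σ := fun _ => 4 ^ N * c ^ 2 / δ) (by linarith) fun _ => ?_) p hp x
      gcongr
      exact (le_self_pow₀ (one_le_invDerivConst N) two_ne_zero).trans
        (le_mul_of_one_le_left (by positivity) (one_le_pow₀ (by norm_num)))
    · rw [iteratedDeriv_succ']
      calc ‖iteratedDeriv N (deriv w⁻¹) x‖
          ≤ t ^ N * (2 ^ N * (κ * (2 ^ N * (c / δ * (c / δ))))) := htop N le_rfl x
        _ = t ^ N * (κ / δ) * (4 ^ N * c ^ 2 / δ) := by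
          rw [show (4 : ℝ) ^ N = 2 ^ N * 2 ^ N by rw [← mul_pow]; norm_num]
          field_simp
        _ ≤ t ^ N * t * (4 ^ N * c ^ 2 / δ) := by gcongr
        _ = t ^ (N + 1) * (4 ^ N * c ^ 2 / δ) := by ring

section IntegrationByParts

variable {𝔸 : Type*} [NormedRing 𝔸] [NormedAlgebra ℝ 𝔸]

-- `g ↦ -(g u)'` is the transpose of `u · d/dx`, which fixes `E` when `E' = w E` and `u w = 1`.
noncomputable def ibpOp (u g : ℝ → 𝔸) : ℝ → 𝔸 := -deriv (g * u)

lemma contDiff_ibpOp {n : ℕ} {u g : ℝ → 𝔸} (hu : ContDiff ℝ (n + 1 : ℕ) u)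
    (hg : ContDiff ℝ (n + 1 : ℕ) g) : ContDiff ℝ n (ibpOp u g) :=
  (ContDiff.deriv' (by exact_mod_cast hg.mul hu)).neg

lemma contDiff_ibpOp_iterate {N : ℕ} {u g : ℝ → 𝔸} (hu : ContDiff ℝ N u) (hg : ContDiff ℝ N g)
    {m : ℕ} (hm : m ≤ N) : ContDiff ℝ (N - m : ℕ) ((ibpOp u)^[m] g) := by
  induction m with
  | zero => simpa using hg
  | succ m ih =>
    have hNm : N - m = (N - (m + 1)) + 1 := by omega
    rw [Function.iterate_succ_apply']
    refine contDiff_ibpOp (hu.of_le ?_) (hNm ▸ ih (by omega))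
    exact_mod_cast (by omega : N - (m + 1) + 1 ≤ N)

lemma Function.Periodic.ibpOp {P : ℝ} {u g : ℝ → 𝔸} (hu : u.Periodic P) (hg : g.Periodic P) :
    (ibpOp u g).Periodic P := fun x => by
  change -deriv (g * u) (x + P) = -deriv (g * u) x
  rw [← deriv_comp_add_const, (hg.mul hu).funext]

lemma iteratedDerivBound_ibpOp {n : ℕ} {t a : ℝ} {ρ : ℝ → ℝ} {u g : ℝ → 𝔸} (ht : 0 ≤ t)
    (hu : ContDiff ℝ (n + 1 : ℕ) u) (hg : ContDiff ℝ (n + 1 : ℕ) g)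
    (hub : IteratedDerivBound (n + 1) t (fun _ => a) u)
    (hgb : IteratedDerivBound (n + 1) t ρ g) :
    IteratedDerivBound n t (fun x => t * (2 ^ (n + 1) * (ρ x * a))) (ibpOp u g) :=
  (hgb.mul hub ht hg hu).deriv.neg

lemma iteratedDerivBound_ibpOp_iterate {N : ℕ} {t a : ℝ} {ρ : ℝ → ℝ} {u g : ℝ → 𝔸} (ht : 0 ≤ t)
    (hu : ContDiff ℝ N u) (hg : ContDiff ℝ N g) (hub : IteratedDerivBound N t (fun _ => a) u)
    (hgb : IteratedDerivBound N t ρ g) {m : ℕ} (hm : m ≤ N) :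
    IteratedDerivBound (N - m) t (fun x => (2 ^ N * a * t) ^ m * ρ x) ((ibpOp u)^[m] g) := by
  induction m with
  | zero => simpa using hgb
  | succ m ih =>
    have hNm : N - m = (N - (m + 1)) + 1 := by omega
    have hm' : N - (m + 1) + 1 ≤ N := by omega
    rw [Function.iterate_succ_apply']
    have ha : 0 ≤ a := hub.nonneg 0
    refine (iteratedDerivBound_ibpOp ht (hu.of_le (by exact_mod_cast hm'))
      (hNm ▸ contDiff_ibpOp_iterate hu hg (by omega)) (hub.of_le hm')
      (hNm ▸ ih (by omega))).mono ht fun x => ?_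
    have hρ : 0 ≤ ρ x := hgb.nonneg x
    calc t * (2 ^ (N - (m + 1) + 1) * ((2 ^ N * a * t) ^ m * ρ x * a))
        ≤ t * (2 ^ N * ((2 ^ N * a * t) ^ m * ρ x * a)) := by
          gcongr
          exact one_le_two
      _ = (2 ^ N * a * t) ^ (m + 1) * ρ x := by ring

variable [CompleteSpace 𝔸]

lemma integral_mul_eq_integral_ibpOp_mul {a b : ℝ} {u g w E : ℝ → 𝔸}
    (hgu : ContDiff ℝ 1 (g * u)) (hw : Continuous w) (hE : ∀ x, HasDerivAt E (w x * E x) x)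
    (huw : ∀ x, u x * w x = 1) (hab : (g * u) b * E b = (g * u) a * E a) :
    ∫ x in a..b, g x * E x = ∫ x in a..b, ibpOp u g x * E x := by
  have hEc : Continuous E := continuous_iff_continuousAt.2 fun x => (hE x).continuousAt
  have hparts := intervalIntegral.integral_mul_deriv_eq_deriv_mul
    (fun x _ => (hgu.differentiable one_ne_zero x).hasDerivAt) (fun x _ => hE x)
    ((hgu.continuous_deriv le_rfl).intervalIntegrable a b) ((hw.mul hEc).intervalIntegrable a b)
  have hgE : ∀ x, (g * u) x * (w x * E x) = g x * E x := fun x => by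
    rw [Pi.mul_apply, mul_assoc, ← mul_assoc (u x), huw, one_mul]
  simp only [hgE, hab, sub_self, zero_sub] at hparts
  rw [hparts, ← intervalIntegral.integral_neg]
  simp [ibpOp]

lemma integral_mul_eq_integral_ibpOp_iterate_mul {N : ℕ} {P : ℝ} {u g w E : ℝ → 𝔸}
    (hu : ContDiff ℝ N u) (hg : ContDiff ℝ N g) (huP : u.Periodic P) (hgP : g.Periodic P)
    (hw : Continuous w) (hE : ∀ x, HasDerivAt E (w x * E x) x) (huw : ∀ x, u x * w x = 1)
    (hEP : E P = E 0) {m : ℕ} (hm : m ≤ N) :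
    ∫ x in 0..P, g x * E x = ∫ x in 0..P, (ibpOp u)^[m] g x * E x := by
  induction m with
  | zero => rfl
  | succ m ih =>
    rw [ih (by omega), Function.iterate_succ_apply']
    have hgmP : ((ibpOp u)^[m] g * u).Periodic P :=
      (Function.Iterate.rec (fun f : ℝ → 𝔸 => f.Periodic P) hgP (fun _ hf => huP.ibpOp hf)
        m).mul huP
    refine integral_mul_eq_integral_ibpOp_mul (((contDiff_ibpOp_iterate hu hg
      (by omega : m ≤ N)).mul (hu.of_le (by exact_mod_cast N.sub_le m))).of_le ?_) hw hE huw ?_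
    · exact_mod_cast (by omega : 1 ≤ N - m)
    · rw [hEP, ← hgmP 0, zero_add]

theorem norm_integral_mul_le_of_iteratedDerivBound {N : ℕ} {P t a b : ℝ} {u g w E : ℝ → 𝔸}
    (hP : 0 ≤ P) (ht : 0 ≤ t) (hu : ContDiff ℝ N u) (hg : ContDiff ℝ N g)
    (huP : u.Periodic P) (hgP : g.Periodic P) (hw : Continuous w)
    (hE : ∀ x, HasDerivAt E (w x * E x) x) (huw : ∀ x, u x * w x = 1) (hEP : E P = E 0)
    (hE1 : ∀ x, ‖E x‖ = 1) (hub : IteratedDerivBound N t (fun _ => a) u)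
    (hgb : IteratedDerivBound N t (fun x => b * ‖g x‖) g) :
    ‖∫ x in 0..P, g x * E x‖ ≤ (2 ^ N * a * t) ^ N * b * ∫ x in 0..P, ‖g x‖ := by
  set C := (2 ^ N * a * t) ^ N
  have hpointwise : ∀ x, ‖(ibpOp u)^[N] g x * E x‖ ≤ C * (b * ‖g x‖) := fun x => by
    calc ‖(ibpOp u)^[N] g x * E x‖ ≤ ‖(ibpOp u)^[N] g x‖ * ‖E x‖ := norm_mul_le _ _
      _ ≤ t ^ 0 * (C * (b * ‖g x‖)) := by
        rw [hE1, mul_one]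
        exact iteratedDerivBound_ibpOp_iterate ht hu hg hub hgb le_rfl 0 (Nat.zero_le _) x
      _ = C * (b * ‖g x‖) := by rw [pow_zero, one_mul]
  calc ‖∫ x in 0..P, g x * E x‖ = ‖∫ x in 0..P, (ibpOp u)^[N] g x * E x‖ := by
        rw [integral_mul_eq_integral_ibpOp_iterate_mul hu hg huP hgP hw hE huw hEP le_rfl]
    _ ≤ ∫ x in 0..P, C * (b * ‖g x‖) :=
        intervalIntegral.norm_integral_le_of_norm_le hP (.of_forall fun x _ => hpointwise x)
          ((continuous_const.mul (continuous_const.mul hg.continuous.norm)).intervalIntegrable _ _)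
    _ = C * b * ∫ x in 0..P, ‖g x‖ := by
        rw [intervalIntegral.integral_const_mul, intervalIntegral.integral_const_mul, mul_assoc]

end IntegrationByParts

lemma hasDerivAt_cexp_I_mul_ofReal {φ : ℝ → ℝ} {φ' x : ℝ} (hφ : HasDerivAt φ φ' x) :
    HasDerivAt (fun y => cexp (I * φ y)) (I * φ' * cexp (I * φ x)) x := by
  simpa only [mul_comm (cexp _)] using (hφ.ofReal_comp.const_mul I).cexp

lemma cexp_I_mul_ofReal_eq_of_sub_eq {x y : ℝ} {n : ℤ} (h : y - x = 2 * Real.pi * n) :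
    cexp (I * y) = cexp (I * x) :=
  exp_eq_exp_iff_exists_int.2 ⟨n, by
    rw [show (y : ℂ) = x + 2 * Real.pi * n by exact_mod_cast (sub_eq_iff_eq_add'.1 h)]
    ring⟩

lemma norm_iteratedDeriv_I_mul_ofReal {n : ℕ} {ψ : ℝ → ℝ} (hψ : ContDiff ℝ n ψ) (x : ℝ) :
    ‖iteratedDeriv n (fun y => I * (ψ y : ℂ)) x‖ = |iteratedDeriv n ψ x| := by
  rw [iteratedDeriv_const_mul_field, norm_mul, norm_I, one_mul, iteratedDeriv_eq_iteratedFDeriv,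
    iteratedDeriv_eq_iteratedFDeriv, show (fun y => (ψ y : ℂ)) = ofRealCLM ∘ ψ from rfl,
    ofRealCLM.iteratedFDeriv_comp_left hψ.contDiffAt le_rfl]
  simp

lemma norm_iteratedDeriv_succ_I_mul_phase_deriv {m : ℕ} {v : ℝ → ℝ} (hv : ContDiff ℝ (m + 2) v)
    (k j x : ℝ) :
    ‖iteratedDeriv (m + 1) (fun y => I * ((k * deriv v y - j : ℝ) : ℂ)) x‖ =
      |k| * |iteratedDeriv (m + 2) v x| := by
  have hv' : ContDiff ℝ (m + 1 : ℕ) (deriv v) := ContDiff.deriv' (by exact_mod_cast hv)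
  have hderiv : deriv (fun y => k * deriv v y - j) = fun y => k * deriv (deriv v) y :=
    funext fun y => by
      simp [(hv'.differentiable (by simp)) y]
  rw [norm_iteratedDeriv_I_mul_ofReal ((contDiff_const.mul hv').sub contDiff_const),
    iteratedDeriv_succ', hderiv, iteratedDeriv_const_mul_field, abs_mul, ← iteratedDeriv_succ',
    ← iteratedDeriv_succ']

lemma pow_div_mul_one_add_div_eq_sum (a κ d : ℝ) (hd : d ≠ 0) (r : ℕ) :
    (a / d * (1 + κ / d)) ^ r = a ^ r * ∑ n ∈ range (r + 1), r.choose n * κ ^ n / d ^ (n + r) := by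
  rw [mul_pow, div_pow, add_comm, add_pow, div_mul_eq_mul_div, mul_div_assoc, sum_div]
  congr 1
  refine sum_congr rfl fun n _ => ?_
  rw [one_pow, mul_one, div_pow, pow_add]
  field_simp

lemma infDist_image_mul_le_abs_mul_sub {μ₂ μ₁ k j s : ℝ} (hs : s ∈ Set.Icc μ₂ μ₁) :
    Metric.infDist j ((fun t => k * t) '' Set.Icc μ₂ μ₁) ≤ |k * s - j| := by
  rw [abs_sub_comm, ← Real.dist_eq]
  exact Metric.infDist_le_dist_of_mem (Set.mem_image_of_mem _ hs)

lemma infDist_image_mul_pos {μ₂ μ₁ k j : ℝ} (hμ : μ₂ ≤ μ₁)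
    (hj : j ∉ (fun t => k * t) '' Set.Icc μ₂ μ₁) :
    0 < Metric.infDist j ((fun t => k * t) '' Set.Icc μ₂ μ₁) :=
  ((isCompact_Icc.image (continuous_const_mul k)).isClosed.notMem_iff_infDist_pos
    ((Set.nonempty_Icc.2 hμ).image _)).1 hj

lemma le_sum_range_abs (f : ℕ → ℝ) {n r : ℕ} (hn : n ≤ r) : f n ≤ ∑ i ∈ range (r + 1), |f i| :=
  (le_abs_self _).trans (single_le_sum (fun i _ => abs_nonneg (f i)) (mem_range.2 (by omega)))

theorem norm_integral_mul_cexp_phase_le {N β : ℕ} {k j : ℤ} {v : ℝ → ℝ} {h : ℝ → ℂ}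
    {d F Hc : ℝ} (hv : ContDiff ℝ (N + 1 : ℕ) v) (hv'P : (deriv v).Periodic (2 * Real.pi * β))
    (hvP : ∃ m : ℤ, v (2 * Real.pi * β) - v 0 = 2 * Real.pi * m) (hh : ContDiff ℝ N h)
    (hhP : h.Periodic (2 * Real.pi * β)) (hd : 0 < d) (hvd : ∀ x, d ≤ |k * deriv v x - j|)
    (hF : 0 ≤ F) (hvF : ∀ m < N, ∀ x, |iteratedDeriv (m + 2) v x| ≤ F)
    (hhHc : ∀ p ≤ N, ∀ x, ‖iteratedDeriv p h x‖ ≤ Hc * ‖h x‖) :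
    ‖∫ x in (0 : ℝ)..(2 * Real.pi * β), h x * cexp (I * ((k * v x - j * x : ℝ) : ℂ))‖ ≤
      (2 ^ N * (invDerivConst N / d) * (1 + |(k : ℝ)| * F / d)) ^ N * Hc *
        ∫ x in (0 : ℝ)..(2 * Real.pi * β), ‖h x‖ := by
  set w : ℝ → ℂ := fun x => I * ((k * deriv v x - j : ℝ) : ℂ)
  have hwd : ∀ x, d ≤ ‖w x‖ := fun x => by
    simpa only [w, norm_mul, norm_I, one_mul, norm_real, Real.norm_eq_abs] using hvd x
  have hw0 : ∀ x, w x ≠ 0 := fun x hx => by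
    have := hwd x
    rw [hx, norm_zero] at this
    linarith
  have hw : ContDiff ℝ N w := contDiff_const.mul (ofRealCLM.contDiff.comp
    ((contDiff_const.mul (ContDiff.deriv' (by exact_mod_cast hv))).sub contDiff_const))
  have hdw : ∀ m < N, ∀ x, ‖iteratedDeriv (m + 1) w x‖ ≤ |(k : ℝ)| * F := fun m hm x => by
    have hm2 : m + 2 ≤ N + 1 := by omega
    rw [norm_iteratedDeriv_succ_I_mul_phase_deriv (hv.of_le (by exact_mod_cast hm2))]
    exact mul_le_mul_of_nonneg_left (hvF m hm x) (abs_nonneg _)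
  set t := 1 + |(k : ℝ)| * F / d
  have ht : 1 ≤ t := le_add_of_nonneg_right (by positivity)
  have hhb : IteratedDerivBound N t (fun x => Hc * ‖h x‖) h := fun p hp x =>
    (hhHc p hp x).trans (le_mul_of_one_le_left ((norm_nonneg _).trans (hhHc 0 N.zero_le x))
      (one_le_pow₀ ht))
  set φ : ℝ → ℝ := fun x => k * v x - j * x
  have hE : ∀ x, HasDerivAt (fun y => cexp (I * φ y)) (w x * cexp (I * φ x)) x := fun x => by
    have := hasDerivAt_cexp_I_mul_ofReal
      (((hv.differentiable (by simp) x).hasDerivAt.const_mul (k : ℝ)).sub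
        ((hasDerivAt_id x).const_mul (j : ℝ)))
    rwa [mul_one] at this
  have hEP : cexp (I * φ (2 * Real.pi * β)) = cexp (I * φ 0) := by
    obtain ⟨m, hm⟩ := hvP
    refine cexp_I_mul_ofReal_eq_of_sub_eq (n := k * m - j * β) ?_
    push_cast
    linear_combination (k : ℝ) * hm
  have huP : w⁻¹.Periodic (2 * Real.pi * β) := fun x => by simp only [Pi.inv_apply, w, hv'P x]
  exact norm_integral_mul_le_of_iteratedDerivBound (by positivity) (by positivity)
    (hw.inv hw0) hh huP hhP hw.continuous hE (fun x => inv_mul_cancel₀ (hw0 x)) hEP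
    (fun x => norm_exp_I_mul_ofReal _) (IteratedDerivBound.inv hd (by positivity) hw hwd hdw) hhb

theorem oscillatory_entry_bound_differentiable_general
    (r : ℕ) (Υ H : ℕ → ℝ) :
    ∃ W : ℕ → ℝ, (∀ n, n ≤ r → 0 ≤ W n) ∧
      ∀ (β : ℕ), 0 < β →
      ∀ (v : ℝ → ℝ) (h : ℝ → ℂ) (μ₁ μ₂ : ℝ),
        ContDiff ℝ (r + 1 : ℕ) v →
        (∀ x : ℝ, deriv v (x + 2 * Real.pi * β) = deriv v x) →
        (∃ m : ℤ, v (2 * Real.pi * β) - v 0 = 2 * Real.pi * m) →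
        ContDiff ℝ (r : ℕ) h →
        (∀ x : ℝ, h (x + 2 * Real.pi * β) = h x) →
        (∀ x : ℝ, μ₂ ≤ deriv v x) → (∀ x : ℝ, deriv v x ≤ μ₁) →
        (∃ x : ℝ, deriv v x = μ₂) → (∃ x : ℝ, deriv v x = μ₁) →
        (∀ n, 1 ≤ n → n ≤ r → ∀ x : ℝ, |iteratedDeriv (n + 1) v x| ≤ Υ n) →
        (∀ n, 1 ≤ n → n ≤ r → ∀ x : ℝ, ‖iteratedDeriv n h x‖ ≤ H n * ‖h x‖) →
        ∀ j k : ℤ,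
          (j : ℝ) ∉ (fun t => (k : ℝ) * t) '' Set.Icc μ₂ μ₁ →
          ‖(1 / (2 * Real.pi) : ℂ) *
              ∫ x in (0 : ℝ)..(2 * Real.pi * β),
                h x * Complex.exp (Complex.I * ((↑k * v x - ↑j * x : ℝ) : ℂ))‖ ≤
            (∫ x in (0 : ℝ)..(2 * Real.pi * β), ‖h x‖) / (2 * Real.pi) *
              ∑ n ∈ Finset.range (r + 1),
                W n * |(k : ℝ)| ^ n /
                  (Metric.infDist (j : ℝ) ((fun t => (k : ℝ) * t) '' Set.Icc μ₂ μ₁)) ^ (n + r) := by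
  set F := ∑ n ∈ range (r + 1), |Υ n|
  set Hc := 1 + ∑ n ∈ range (r + 1), |H n|
  refine ⟨fun n => (2 ^ r * invDerivConst r) ^ r * Hc * r.choose n * F ^ n,
    fun n _ => by have := one_le_invDerivConst r; positivity, ?_⟩
  intro β _ v h μ₁ μ₂ hv hv'P hvP hh hhP hμ₂ hμ₁ _ _ hΥ hH j k hj
  set d := Metric.infDist (j : ℝ) ((fun t => (k : ℝ) * t) '' Set.Icc μ₂ μ₁)
  have hd : 0 < d := infDist_image_mul_pos ((hμ₂ 0).trans (hμ₁ 0)) hj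
  have hHc : ∀ p ≤ r, ∀ x, ‖iteratedDeriv p h x‖ ≤ Hc * ‖h x‖ := fun p hp x => by
    rcases p.eq_zero_or_pos with rfl | hp0
    · exact le_mul_of_one_le_left (norm_nonneg _)
        (le_add_of_nonneg_right (sum_nonneg fun i _ => abs_nonneg (H i)))
    · exact (hH p hp0 hp x).trans (mul_le_mul_of_nonneg_right
        ((le_sum_range_abs H hp).trans (le_add_of_nonneg_left zero_le_one)) (norm_nonneg _))
  have hbound := norm_integral_mul_cexp_phase_le hv hv'P hvP hh hhP hd
    (fun x => infDist_image_mul_le_abs_mul_sub ⟨hμ₂ x, hμ₁ x⟩) (by positivity)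
    (fun m hm x => (hΥ (m + 1) (by omega) hm x).trans (le_sum_range_abs Υ hm)) hHc
  rw [norm_mul, show ‖(1 / (2 * Real.pi) : ℂ)‖ = 1 / (2 * Real.pi) by
    simp [abs_of_pos Real.pi_pos]]
  calc 1 / (2 * Real.pi) * ‖∫ x in (0 : ℝ)..(2 * Real.pi * β), h x * cexp (I * _)‖
      ≤ 1 / (2 * Real.pi) * ((2 ^ r * (invDerivConst r / d) * (1 + |(k : ℝ)| * F / d)) ^ r * Hc *
          ∫ x in (0 : ℝ)..(2 * Real.pi * β), ‖h x‖) :=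
        mul_le_mul_of_nonneg_left hbound (by positivity)
    _ = _ := by
      rw [show 2 ^ r * (invDerivConst r / d) = 2 ^ r * invDerivConst r / d by ring,
        pow_div_mul_one_add_div_eq_sum _ _ _ hd.ne']
      simp only [mul_sum, sum_mul, div_eq_mul_inv]
      refine sum_congr rfl fun n _ => ?_
      rw [mul_pow]
      ring

/-- Polynomial decay of the Fourier coefficient matrix of a generalized
transfer operator, under the differentiable distortion conditions. The constants `W r n`
depend only on `r`, `Υ` and `H`. Here `d(j, k[μ₂,μ₁])` is `Metric.infDist`. -/
theorem oscillatory_entry_bound_differentiable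
    (r : ℕ) (hr : 1 ≤ r) (Υ H : ℕ → ℝ) :
    ∃ W : ℕ → ℝ, (∀ n, n ≤ r → 0 ≤ W n) ∧
      ∀ (β : ℕ), 0 < β →
      ∀ (v : ℝ → ℝ) (h : ℝ → ℂ) (μ₁ μ₂ : ℝ),
        ContDiff ℝ (r + 1 : ℕ) v →
        (∀ x : ℝ, deriv v (x + 2 * Real.pi * β) = deriv v x) →
        (∃ m : ℤ, v (2 * Real.pi * β) - v 0 = 2 * Real.pi * m) →
        ContDiff ℝ (r : ℕ) h →
        (∀ x : ℝ, h (x + 2 * Real.pi * β) = h x) →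
        (∀ x : ℝ, μ₂ ≤ deriv v x) → (∀ x : ℝ, deriv v x ≤ μ₁) →
        (∃ x : ℝ, deriv v x = μ₂) → (∃ x : ℝ, deriv v x = μ₁) →
        (∀ n, 1 ≤ n → n ≤ r → ∀ x : ℝ, |iteratedDeriv (n + 1) v x| ≤ Υ n) →
        (∀ n, 1 ≤ n → n ≤ r → ∀ x : ℝ, ‖iteratedDeriv n h x‖ ≤ H n * ‖h x‖) →
        ∀ j k : ℤ,
          (j : ℝ) ∉ (fun t => (k : ℝ) * t) '' Set.Icc μ₂ μ₁ →
          ‖(1 / (2 * Real.pi) : ℂ) *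
              ∫ x in (0 : ℝ)..(2 * Real.pi * β),
                h x * Complex.exp (Complex.I * ((↑k * v x - ↑j * x : ℝ) : ℂ))‖ ≤
            (∫ x in (0 : ℝ)..(2 * Real.pi * β), ‖h x‖) / (2 * Real.pi) *
              ∑ n ∈ Finset.range (r + 1),
                W n * |(k : ℝ)| ^ n /
                  (Metric.infDist (j : ℝ) ((fun t => (k : ℝ) * t) '' Set.Icc μ₂ μ₁)) ^ (n + r) :=
  oscillatory_entry_bound_differentiable_general r Υ H
end

section
/- Let β be a positive integer, 0 < λ₁ ≤ λ₂, and δ > 0. Let v : ℝ → ℝ satisfy v(x + 2πβ) = v(x) + 2π for all x and λ₂⁻¹ ≤ v'(x) ≤ λ₁⁻¹ for all real x, and suppose v extends to a holomorphic function on the closed strip {z ∈ ℂ : |Im z| ≤ δ} with v' nonvanishing there and sup_{|Im z| ≤ δ} |v''(z)/v'(z)| ≤ C_{1,δ} < ∞. For j,k ∈ ℤ define L_{jk} = (1/2π) ∫₀^{2πβ} v'(x) e^{i(k v(x) − j x)} dx. Then: (i) for every p₁ > λ₁⁻¹ there exist C > 0 and ζ ∈ (0,δ] such that |L_{jk}|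 ≤ C e^{−ζ|j − p₁ k|} whenever k = 0 or j/k > p₁; and (ii) for every p₂ ∈ (0, λ₂⁻¹) there exist C' > 0 and ζ' ∈ (0,δ] such that |L_{jk}| ≤ C' e^{−ζ'|j − p₂ k|} whenever k = 0 or j/k < p₂. -/
/-!
The integrand `v'(x) e^{i(k v(x) - j x)}` is the trace on `ℝ` of the holomorphic function
`g(z) = V'(z) e^{i(k V(z) - j z)}`. By the identity theorem `V(z + 2πβ) = V(z) + 2π` on the whole
strip, so `g` is `2πβ`-periodic there, and Cauchy's theorem on the rectangle `[0, 2πβ] × [0, y]`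
moves the integral to the line `Im z = y`, where `|g| = |V'| e^{j y - k Im V}`. Near the real axis
`Im V(x + iy) = y w` with `w` within `ε` of `v'(x) ∈ [λ₂⁻¹, λ₁⁻¹]`, so the exponent is
`y (j - k w)`. In each of the two sectors of `(j, k)`, shifting up or down by `ζ` (depending on the
sign of `j - p k`) makes it at most `-ζ |j - p k|`.
-/

open Complex Set Filter Topology intervalIntegral
open scoped Interval Real

theorem abs_le_abs_of_mem_uIcc_zero {t y : ℝ} (h : t ∈ [[0, y]]) : |t| ≤ |y| := by
  simpa using abs_sub_left_of_mem_uIcc h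

def strip (δ : ℝ) : Set ℂ := im ⁻¹' Ioo (-δ) δ

namespace strip

variable {δ : ℝ}

@[simp] theorem mem_iff {z : ℂ} : z ∈ strip δ ↔ |z.im| < δ := by
  simp [strip, abs_lt]

theorem isOpen : IsOpen (strip δ) := isOpen_Ioo.preimage continuous_im

theorem convex : Convex ℝ (strip δ) := (convex_Ioo _ _).linear_preimage imLm

theorem mono {δ' : ℝ} (h : δ ≤ δ') : strip δ ⊆ strip δ' := fun _ hz =>
  mem_iff.2 ((mem_iff.1 hz).trans_le h)

theorem ofReal_mem (hδ : 0 < δ) (x : ℝ) : (x : ℂ) ∈ strip δ := by simpa using hδ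

theorem add_ofReal_mem {z : ℂ} (hz : z ∈ strip δ) (x : ℝ) : z + x ∈ strip δ := by
  simpa using hz

theorem add_mul_I_mem {y : ℝ} (hy : |y| < δ) (x : ℝ) : (x + y * I : ℂ) ∈ strip δ := by
  simpa using hy

theorem reProdIm_Icc_subset {c : ℝ} (hc : c < δ) (s : Set ℝ) : s ×ℂ Icc (-c) c ⊆ strip δ :=
  fun _ hz => mem_iff.2 ((abs_le.2 hz.2).trans_lt hc)

end strip

section StripAnalysis

variable {E : Type*} [NormedAddCommGroup E] [NormedSpace ℂ E]

theorem eqOn_strip_of_forall_ofReal [CompleteSpace E] {δ : ℝ} (hδ : 0 < δ) {f g : ℂ → E}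
    (hf : DifferentiableOn ℂ f (strip δ)) (hg : DifferentiableOn ℂ g (strip δ))
    (hfg : ∀ x : ℝ, f x = g x) : EqOn f g (strip δ) := by
  have hreal : Tendsto ofReal (𝓝[≠] 0) (𝓝[≠] (0 : ℂ)) :=
    continuous_ofReal.continuousWithinAt.tendsto_nhdsWithin fun x hx => by simpa using hx
  exact (hf.analyticOnNhd strip.isOpen).eqOn_of_preconnected_of_frequently_eq
    (hg.analyticOnNhd strip.isOpen) strip.convex.isPreconnected (strip.ofReal_mem hδ 0)
    (hreal.frequently (Frequently.of_forall hfg))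

theorem add_period_of_forall_ofReal [CompleteSpace E] {δ T : ℝ} {c : E} (hδ : 0 < δ)
    {V : ℂ → E} (hV : DifferentiableOn ℂ V (strip δ)) (hper : ∀ x : ℝ, V (x + T) = V x + c) :
    ∀ z ∈ strip δ, V (z + T) = V z + c :=
  eqOn_strip_of_forall_ofReal hδ
    (hV.comp (differentiableOn_id.add_const _) fun z hz => strip.add_ofReal_mem hz T)
    (hV.add_const c) fun x => by simpa using hper x

theorem deriv_add_period {δ T : ℝ} {c : E} {V : ℂ → E}
    (hper : ∀ z ∈ strip δ, V (z + T) = V z + c) {z : ℂ} (hz : z ∈ strip δ) :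
    deriv V (z + T) = deriv V z := by
  have hloc : (fun w => V (w + T)) =ᶠ[𝓝 z] fun w => V w + c :=
    eventuallyEq_of_mem (strip.isOpen.mem_nhds hz) hper
  rw [← deriv_comp_add_const, hloc.deriv_eq, deriv_add_const]

theorem integral_eq_integral_add_mul_I_of_periodic {g : ℂ → E} {T y : ℝ}
    (hg : DifferentiableOn ℂ g ([[0, T]] ×ℂ [[0, y]]))
    (hper : ∀ t ∈ [[0, y]], g (T + t * I) = g (t * I)) :
    ∫ x in 0..T, g x = ∫ x in 0..T, g (x + y * I) := by
  have h := integral_boundary_rect_eq_zero_of_differentiableOn g 0 (T + y * I) (by simpa using hg)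
  simp only [zero_re, zero_im, add_re, ofReal_re, mul_re, I_re, I_im, ofReal_im, add_im, mul_im,
    mul_zero, sub_zero, mul_one, zero_mul, add_zero, ofReal_zero, zero_add] at h
  rw [integral_congr fun t ht => hper t ht, add_sub_cancel_right, sub_eq_zero] at h
  exact h

-- Mean value inequality on `[x, x + iy]`, with `F'` uniformly continuous on a compact box.
theorem exists_forall_norm_sub_sub_mul_I_smul_deriv_le [CompleteSpace E] {δ a b ε : ℝ} (hδ : 0 < δ) {F : ℂ → E}
    (hF : DifferentiableOn ℂ F (strip δ)) (hε : 0 < ε) :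
    ∃ ζ > 0, ζ < δ ∧ ∀ x ∈ Icc a b, ∀ y : ℝ, |y| ≤ ζ →
      ‖F (x + y * I) - F x - (y * I) • deriv F x‖ ≤ ε * |y| := by
  set K := Icc a b ×ℂ Icc (-(δ / 2)) (δ / 2)
  have hKS : K ⊆ strip δ := strip.reProdIm_Icc_subset (half_lt_self hδ) _
  have hK : IsCompact K := isCompact_Icc.reProdIm isCompact_Icc
  have hF' := (hF.analyticOnNhd strip.isOpen).deriv.continuousOn
  obtain ⟨ζ₀, hζ₀, hclose⟩ := Metric.uniformContinuousOn_iff_le.1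
    (hK.uniformContinuousOn_of_continuous (hF'.mono hKS)) ε hε
  refine ⟨min ζ₀ (δ / 2), by positivity, by linarith [min_le_right ζ₀ (δ / 2)], ?_⟩
  intro x hx y hy
  have hmemK : ∀ t ∈ [[0, y]], (x + t * I : ℂ) ∈ K := fun t ht => by
    have ht' : |t| ≤ δ / 2 :=
      (abs_le_abs_of_mem_uIcc_zero ht).trans (hy.trans (min_le_right _ _))
    exact ⟨by simpa using hx, by simpa [abs_le] using ht'⟩
  have hderiv : ∀ t ∈ [[0, y]],
      HasDerivWithinAt (fun t : ℝ => F (x + t * I) - (t * I) • deriv F x)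
        (I • (deriv F (x + t * I) - deriv F x)) [[0, y]] t := by
    intro t ht
    have hFt := (hF.differentiableAt (strip.isOpen.mem_nhds (hKS (hmemK t ht)))).hasDerivAt
    have hline : HasDerivAt (fun t : ℝ => (x + t * I : ℂ)) I t := by
      simpa using ((hasDerivAt_id (t : ℂ)).mul_const I).const_add (x : ℂ) |>.comp_ofReal
    have hlin := ((hasDerivAt_id t).ofReal_comp.mul_const I).smul_const (deriv F x)
    convert ((hFt.scomp t hline).sub hlin).hasDerivWithinAt using 1
    · rfl
    · rw [ofReal_one, one_mul, smul_sub]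
  have hbound : ∀ t ∈ [[0, y]], ‖I • (deriv F (x + t * I) - deriv F x)‖ ≤ ε := by
    intro t ht
    rw [norm_smul, norm_I, one_mul, ← dist_eq_norm]
    refine hclose _ (hmemK t ht) _ (by simpa using hmemK 0 left_mem_uIcc) ?_
    simpa [dist_eq_norm] using
      (abs_le_abs_of_mem_uIcc_zero ht).trans (hy.trans (min_le_left _ _))
  simpa [sub_right_comm] using (convex_uIcc 0 y).norm_image_sub_le_of_norm_hasDerivWithin_le
    hderiv hbound left_mem_uIcc right_mem_uIcc

end StripAnalysis

theorem deriv_ofReal_eq_of_forall_ofReal {V : ℂ → ℂ} {v : ℝ → ℝ} (hVv : ∀ x : ℝ, V x = v x)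
    {x : ℝ} (hV : DifferentiableAt ℂ V x) : deriv V x = deriv v x := by
  have hv : HasDerivAt v (deriv V x).re x := by simpa [hVv] using hV.hasDerivAt.real_of_complex
  have hV' : HasDerivAt (fun t : ℝ => (v t : ℂ)) (deriv V x) x := by
    simpa [hVv] using hV.hasDerivAt.comp_ofReal
  rw [hv.deriv]
  exact hV'.unique hv.ofReal_comp

theorem exists_mem_Icc_eq_mul_of_abs_sub_mul_le {u y c ε : ℝ} (hε : 0 ≤ ε)
    (h : |u - y * c| ≤ ε * |y|) : ∃ w ∈ Icc (c - ε) (c + ε), u = y * w := by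
  rcases eq_or_ne y 0 with rfl | hy
  · exact ⟨c, ⟨by linarith, by linarith⟩, by simpa using h⟩
  · refine ⟨u / y, ?_, by field_simp⟩
    have hw : |u / y - c| ≤ ε := by
      rwa [← mul_le_mul_iff_left₀ (abs_pos.2 hy), ← abs_mul, sub_mul, div_mul_cancel₀ _ hy,
        mul_comm c]
    exact ⟨by linarith [neg_abs_le (u / y - c)], by linarith [le_abs_self (u / y - c)]⟩

theorem exists_abs_eq_forall_mul_sub_mul_le_of_lt_div {j k p ζ : ℝ} (hζ : 0 ≤ ζ)
    (hjk : k = 0 ∨ p < j / k) :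
    ∃ y, |y| = ζ ∧ ∀ w ≤ p, y * (j - k * w) ≤ -ζ * |j - p * k| := by
  by_cases h : p * k ≤ j
  · have hk : 0 ≤ k := by
      rcases hjk with rfl | hjk
      · rfl
      by_contra! hk
      linarith [(lt_div_iff_of_neg hk).1 hjk]
    refine ⟨-ζ, by simp [hζ], fun w hw => ?_⟩
    rw [abs_of_nonneg (by linarith)]
    nlinarith [mul_nonneg (mul_nonneg hζ hk) (sub_nonneg.2 hw)]
  · have hk : k ≤ 0 := by
      rcases hjk with rfl | hjk
      · rfl
      by_contra! hk
      linarith [(lt_div_iff₀ hk).1 hjk]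
    refine ⟨ζ, abs_of_nonneg hζ, fun w hw => ?_⟩
    rw [abs_of_neg (by linarith)]
    nlinarith [mul_nonpos_of_nonpos_of_nonneg (mul_nonpos_of_nonneg_of_nonpos hζ hk)
      (sub_nonneg.2 hw)]

theorem exists_abs_eq_forall_mul_sub_mul_le_of_div_lt {j k p ζ : ℝ} (hζ : 0 ≤ ζ)
    (hjk : k = 0 ∨ j / k < p) :
    ∃ y, |y| = ζ ∧ ∀ w, p ≤ w → y * (j - k * w) ≤ -ζ * |j - p * k| := by
  obtain ⟨y, hy, hle⟩ := exists_abs_eq_forall_mul_sub_mul_le_of_lt_div (j := j) (k := -k)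
    (p := -p) hζ (by rwa [neg_eq_zero, div_neg, neg_lt_neg_iff])
  exact ⟨y, hy, fun w hw => by simpa using hle (-w) (neg_le_neg hw)⟩

/-- The holomorphic extension of the integrand of `L_{jk}`. -/
noncomputable def transferIntegrand (V : ℂ → ℂ) (j k : ℤ) (z : ℂ) : ℂ :=
  deriv V z * exp (I * (k * V z - j * z))

theorem transferIntegrand_ofReal {V : ℂ → ℂ} {v : ℝ → ℝ} (j k : ℤ) {x : ℝ}
    (hVx : V x = v x) (hV'x : deriv V x = deriv v x) :
    transferIntegrand V j k x = deriv v x * exp (I * ((k * v x - j * x : ℝ) : ℂ)) := by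
  simp [transferIntegrand, hVx, hV'x]

theorem transferIntegrand_add_two_pi_mul {V : ℂ → ℂ} (j k n : ℤ) {z : ℂ}
    (hVz : V (z + (2 * π * n : ℝ)) = V z + 2 * π)
    (hV'z : deriv V (z + (2 * π * n : ℝ)) = deriv V z) :
    transferIntegrand V j k (z + (2 * π * n : ℝ)) = transferIntegrand V j k z := by
  have hexp : I * (k * (V z + 2 * π) - j * (z + (2 * π * n : ℝ)))
      = I * (k * V z - j * z) + (k - j * n : ℤ) * (2 * π * I) := by
    push_cast; ring
  rw [transferIntegrand, hVz, hV'z, hexp, exp_add, exp_int_mul_two_pi_mul_I, mul_one,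
    transferIntegrand]

theorem norm_transferIntegrand (V : ℂ → ℂ) (j k : ℤ) (z : ℂ) :
    ‖transferIntegrand V j k z‖ = ‖deriv V z‖ * Real.exp (j * z.im - k * (V z).im) := by
  rw [transferIntegrand, norm_mul, norm_exp]
  congr 2
  simp only [mul_sub, sub_re, mul_re, I_re, intCast_re, intCast_im, zero_mul, sub_zero, I_im,
    mul_im, add_zero, one_mul, zero_sub, sub_neg_eq_add]
  ring

theorem integral_transferIntegrand_eq_add_mul_I {δ y : ℝ} {V : ℂ → ℂ}
    (hV : DifferentiableOn ℂ V (strip δ)) {n : ℤ}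
    (hper : ∀ z ∈ strip δ, V (z + (2 * π * n : ℝ)) = V z + 2 * π) (j k : ℤ) (hy : |y| < δ) :
    ∫ x in 0..2 * π * n, transferIntegrand V j k x =
      ∫ x in 0..2 * π * n, transferIntegrand V j k (x + y * I) := by
  have hrect : ∀ {a t : ℝ}, t ∈ [[0, y]] → (a + t * I : ℂ) ∈ strip δ := fun ht =>
    strip.add_mul_I_mem ((abs_le_abs_of_mem_uIcc_zero ht).trans_lt hy) _
  have hg : DifferentiableOn ℂ (transferIntegrand V j k) (strip δ) := by
    have hV' := (hV.analyticOnNhd strip.isOpen).deriv.differentiableOn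
    exact hV'.mul (((hV.const_mul _).sub (differentiableOn_id.const_mul _)).const_mul _).cexp
  refine integral_eq_integral_add_mul_I_of_periodic (hg.mono fun z hz => ?_) fun t ht => ?_
  · simpa using hrect (a := z.re) hz.2
  · have htS : (t * I : ℂ) ∈ strip δ := by simpa using hrect (a := 0) ht
    rw [add_comm]
    exact transferIntegrand_add_two_pi_mul j k n (hper _ htS) (deriv_add_period hper htS)

theorem norm_transferIntegrand_add_mul_I_le {V : ℂ → ℂ} {j k : ℤ} {x y c ε B : ℝ} (hε : 0 ≤ ε)
    (hVx : (V x).im = 0) (hclose : ‖V (x + y * I) - V x - (y * I) * c‖ ≤ ε * |y|)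
    (hB : ∀ w ∈ Icc (c - ε) (c + ε), y * (j - k * w) ≤ B) :
    ‖transferIntegrand V j k (x + y * I)‖ ≤ ‖deriv V (x + y * I)‖ * Real.exp B := by
  have him : |(V (x + y * I)).im - y * c| ≤ ε * |y| := by
    refine le_trans (le_of_eq ?_) ((abs_im_le_norm _).trans hclose)
    simp [hVx]
  obtain ⟨w, hw, hu⟩ := exists_mem_Icc_eq_mul_of_abs_sub_mul_le hε him
  rw [norm_transferIntegrand]
  gcongr
  calc (j * (x + y * I).im - k * (V (x + y * I)).im : ℝ) = y * (j - k * w) := by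
        rw [hu, add_im, ofReal_im, mul_I_im, ofReal_re, zero_add]; ring
    _ ≤ B := hB w hw

theorem exists_norm_integral_transfer_le {β : ℕ} {δ a b : ℝ} (hδ : 0 < δ) {v : ℝ → ℝ}
    {V : ℂ → ℂ} (hVv : ∀ x : ℝ, V x = v x) (hV : DifferentiableOn ℂ V (strip δ))
    (hlift : ∀ x : ℝ, v (x + 2 * π * β) = v x + 2 * π) (hv' : ∀ x, deriv v x ∈ Icc a b) :
    ∃ M > 0, ∀ ε > 0, ∃ ζ > 0, ζ ≤ δ ∧ ∀ (j k : ℤ) (y B : ℝ), |y| ≤ ζ →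
      (∀ w ∈ Icc (a - ε) (b + ε), y * (j - k * w) ≤ B) →
      ‖∫ x in 0..2 * π * β, ((deriv v x : ℝ) : ℂ) * exp (I * ((k * v x - j * x : ℝ) : ℂ))‖ ≤
        2 * π * β * M * Real.exp B := by
  set T := 2 * π * β
  have hT : 0 ≤ T := by positivity
  have hper : ∀ z ∈ strip δ, V (z + (2 * π * (β : ℤ) : ℝ)) = V z + 2 * π := by
    refine add_period_of_forall_ofReal hδ hV fun x => ?_
    rw [Int.cast_natCast, ← ofReal_add, hVv, hVv, hlift, ofReal_add, ofReal_mul, ofReal_ofNat]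
  have hderiv : ∀ x : ℝ, deriv V x = deriv v x := fun x =>
    deriv_ofReal_eq_of_forall_ofReal hVv
      (hV.differentiableAt (strip.isOpen.mem_nhds (strip.ofReal_mem hδ x)))
  set K := Icc 0 T ×ℂ Icc (-(δ / 2)) (δ / 2)
  obtain ⟨C, hC⟩ := (isCompact_Icc.reProdIm isCompact_Icc).exists_bound_of_continuousOn
    ((hV.analyticOnNhd strip.isOpen).deriv.continuousOn.mono
      (strip.reProdIm_Icc_subset (half_lt_self hδ) (Icc 0 T)))
  refine ⟨max C 1, by positivity, fun ε hε => ?_⟩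
  obtain ⟨ζ, hζ, hζδ, hclose⟩ := exists_forall_norm_sub_sub_mul_I_smul_deriv_le (a := 0) (b := T)
    (half_pos hδ) (hV.mono (strip.mono (half_le_self hδ.le))) hε
  refine ⟨ζ, hζ, by linarith, fun j k y B hy hB => ?_⟩
  have hpt : ∀ x ∈ Icc 0 T, ‖transferIntegrand V j k (x + y * I)‖ ≤ max C 1 * Real.exp B := by
    intro x hx
    have hxK : (x + y * I : ℂ) ∈ K :=
      ⟨by simpa using hx, by simpa [abs_le] using hy.trans hζδ.le⟩
    refine (norm_transferIntegrand_add_mul_I_le (c := deriv v x) hε.le (by simp [hVv]) ?_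
      fun w hw => hB w ?_).trans ?_
    · simpa [hderiv] using hclose x hx y hy
    · exact ⟨by linarith [hw.1, (hv' x).1], by linarith [hw.2, (hv' x).2]⟩
    · gcongr
      exact (hC _ hxK).trans (le_max_left _ _)
  have hshift := integral_transferIntegrand_eq_add_mul_I hV hper j k (hy.trans_lt (by linarith))
  rw [Int.cast_natCast] at hshift
  rw [← integral_congr fun x _ => transferIntegrand_ofReal j k (hVv x) (hderiv x), hshift]
  calc _ ≤ max C 1 * Real.exp B * |T - 0| := norm_integral_le_of_norm_le_const fun x hx =>
        hpt x (Ioc_subset_Icc_self (uIoc_of_le hT ▸ hx))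
    _ = T * max C 1 * Real.exp B := by rw [sub_zero, abs_of_nonneg hT]; ring

theorem norm_one_div_two_pi_mul_le {z : ℂ} {B : ℝ} (h : ‖z‖ ≤ 2 * π * B) :
    ‖(1 / (2 * π) : ℂ) * z‖ ≤ B := by
  rw [norm_mul, show (1 / (2 * π) : ℂ) = ((1 / (2 * π) : ℝ) : ℂ) by push_cast; rfl, norm_real,
    Real.norm_of_nonneg (by positivity), one_div, inv_mul_le_iff₀ (by positivity)]
  exact h

theorem transfer_entry_bound_periodic_analytic_general
    (β : ℕ) (hβ : 0 < β)
    (lam₁ lam₂ δ : ℝ) (hδ : 0 < δ)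
    (v : ℝ → ℝ) (V : ℂ → ℂ)
    (hVv : ∀ x : ℝ, V x = (v x : ℂ))
    (hVhol : DifferentiableOn ℂ V {z : ℂ | |z.im| ≤ δ})
    (hlift : ∀ x : ℝ, v (x + 2 * Real.pi * β) = v x + 2 * Real.pi)
    (hd₂ : ∀ x : ℝ, lam₂⁻¹ ≤ deriv v x) (hd₁ : ∀ x : ℝ, deriv v x ≤ lam₁⁻¹) :
    (∀ p₁ : ℝ, lam₁⁻¹ < p₁ → ∃ Cb > (0 : ℝ), ∃ ζ : ℝ, 0 < ζ ∧ ζ ≤ δ ∧ ∀ j k : ℤ,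
      (k = 0 ∨ p₁ < (j : ℝ) / (k : ℝ)) →
      ‖(1 / (2 * Real.pi) : ℂ) * ∫ x in (0 : ℝ)..(2 * Real.pi * β),
          ((deriv v x : ℝ) : ℂ) * Complex.exp (Complex.I * ((↑k * v x - ↑j * x : ℝ) : ℂ))‖ ≤
        Cb * Real.exp (-ζ * |(j : ℝ) - p₁ * (k : ℝ)|)) ∧
    (∀ p₂ : ℝ, 0 < p₂ → p₂ < lam₂⁻¹ → ∃ Cb > (0 : ℝ), ∃ ζ : ℝ, 0 < ζ ∧ ζ ≤ δ ∧ ∀ j k : ℤ,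
      (k = 0 ∨ (j : ℝ) / (k : ℝ) < p₂) →
      ‖(1 / (2 * Real.pi) : ℂ) * ∫ x in (0 : ℝ)..(2 * Real.pi * β),
          ((deriv v x : ℝ) : ℂ) * Complex.exp (Complex.I * ((↑k * v x - ↑j * x : ℝ) : ℂ))‖ ≤
        Cb * Real.exp (-ζ * |(j : ℝ) - p₂ * (k : ℝ)|)) := by
  obtain ⟨M, hM, hbound⟩ := exists_norm_integral_transfer_le hδ hVv
    (hVhol.mono fun z hz => (strip.mem_iff.1 hz).le) hlift fun x => ⟨hd₂ x, hd₁ x⟩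
  refine ⟨fun p₁ hp₁ => ?_, fun p₂ _ hp₂ => ?_⟩
  · obtain ⟨ζ, hζ, hζδ, hζbound⟩ := hbound (p₁ - lam₁⁻¹) (sub_pos.2 hp₁)
    refine ⟨β * M, by positivity, ζ, hζ, hζδ, fun j k hjk => norm_one_div_two_pi_mul_le ?_⟩
    obtain ⟨y, hy, hexp⟩ := exists_abs_eq_forall_mul_sub_mul_le_of_lt_div hζ.le
      (hjk.imp_left Int.cast_eq_zero.2)
    refine (hζbound j k y _ hy.le fun w hw => hexp w (by linarith [hw.2])).trans_eq ?_
    ring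
  · obtain ⟨ζ, hζ, hζδ, hζbound⟩ := hbound (lam₂⁻¹ - p₂) (sub_pos.2 hp₂)
    refine ⟨β * M, by positivity, ζ, hζ, hζδ, fun j k hjk => norm_one_div_two_pi_mul_le ?_⟩
    obtain ⟨y, hy, hexp⟩ := exists_abs_eq_forall_mul_sub_mul_le_of_div_lt hζ.le
      (hjk.imp_left Int.cast_eq_zero.2)
    refine (hζbound j k y _ hy.le fun w hw => hexp w (by linarith [hw.1])).trans_eq ?_
    ring

/-- Exponential decay of the Fourier-basis transfer operator matrix
`L_{jk} = (1/2π) ∫₀^{2πβ} v'(x) e^{i(k v(x) - j x)} dx` of a uniformly expanding circle map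
satisfying the analytic distortion condition (AD_δ). -/
theorem transfer_entry_bound_periodic_analytic
    (β : ℕ) (hβ : 0 < β)
    (lam₁ lam₂ δ : ℝ) (hlam₁ : 0 < lam₁) (hlam : lam₁ ≤ lam₂) (hδ : 0 < δ)
    (v : ℝ → ℝ) (V : ℂ → ℂ)
    (hVv : ∀ x : ℝ, V x = (v x : ℂ))
    (hVhol : DifferentiableOn ℂ V {z : ℂ | |z.im| ≤ δ})
    (hlift : ∀ x : ℝ, v (x + 2 * Real.pi * β) = v x + 2 * Real.pi)
    (hd₂ : ∀ x : ℝ, lam₂⁻¹ ≤ deriv v x) (hd₁ : ∀ x : ℝ, deriv v x ≤ lam₁⁻¹)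
    (C₁δ : ℝ)
    (hV' : ∀ z : ℂ, |z.im| ≤ δ → deriv V z ≠ 0)
    (hAD : ∀ z : ℂ, |z.im| ≤ δ → ‖deriv (deriv V) z‖ ≤ C₁δ * ‖deriv V z‖) :
    (∀ p₁ : ℝ, lam₁⁻¹ < p₁ → ∃ Cb > (0 : ℝ), ∃ ζ : ℝ, 0 < ζ ∧ ζ ≤ δ ∧ ∀ j k : ℤ,
      (k = 0 ∨ p₁ < (j : ℝ) / (k : ℝ)) →
      ‖(1 / (2 * Real.pi) : ℂ) * ∫ x in (0 : ℝ)..(2 * Real.pi * β),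
          ((deriv v x : ℝ) : ℂ) * Complex.exp (Complex.I * ((↑k * v x - ↑j * x : ℝ) : ℂ))‖ ≤
        Cb * Real.exp (-ζ * |(j : ℝ) - p₁ * (k : ℝ)|)) ∧
    (∀ p₂ : ℝ, 0 < p₂ → p₂ < lam₂⁻¹ → ∃ Cb > (0 : ℝ), ∃ ζ : ℝ, 0 < ζ ∧ ζ ≤ δ ∧ ∀ j k : ℤ,
      (k = 0 ∨ (j : ℝ) / (k : ℝ) < p₂) →
      ‖(1 / (2 * Real.pi) : ℂ) * ∫ x in (0 : ℝ)..(2 * Real.pi * β),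
          ((deriv v x : ℝ) : ℂ) * Complex.exp (Complex.I * ((↑k * v x - ↑j * x : ℝ) : ℂ))‖ ≤
        Cb * Real.exp (-ζ * |(j : ℝ) - p₂ * (k : ℝ)|)) :=
  transfer_entry_bound_periodic_analytic_general β hβ lam₁ lam₂ δ hδ v V hVv hVhol hlift hd₂ hd₁
end

section
/- Let I be a countable index set, let (O_ι)_{ι∈I} be pairwise disjoint nonempty open subintervals of (−1,1), and for each ι let v_ι : [−1,1] → [−1,1] be a C² strictly monotone map with v_ι([−1,1]) equal to the closure of O_ι and with |v_ι''(x)/v_ι'(x)| ≤ C for all x ∈ [−1,1]. Let g : ⋃_ι O_ι → (−1,1) be the full-branch Markov map whose restriction to O_ι is the inverse of v_ι, and suppose |g'(x)| ≥ μ > 0 for all x ∈ ⋃_ι O_ι. Then for every x ∈ ⋃_ι O_ι: √((1 − x²)/(1 − g(x)²)) · |g'(x)| ≥ √(e^{−2C} μ / 2). -/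
/-!
Write `y = g x` for `x` in a branch domain `O_ι`, so that `x = v_ι y`. The distortion bound
`|v''| ≤ C |v'|` makes `log |v'|` a `C`-Lipschitz function, so `|v'| ≥ e^{-2C} |v'(y)|` on the
whole of `[-1, 1]`. By the mean value theorem, `v_ι` moves the two pieces `[-1, y]` and `[y, 1]`
by at least `e^{-2C} |v'(y)|` times their lengths, and since `v_ι` maps `[-1, 1]` into itself
this gives `e^{-2C} |v'(y)| min (1 - y, 1 + y) ≤ min (1 - x, 1 + x)`, hence
`e^{-2C} |v'(y)| (1 - y²) ≤ 2 (1 - x²)`. It remains to use `v'(y) g'(x) = 1` and `|g'(x)| ≥ μ`.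
-/

open Set Filter Topology Real

section Distortion

lemma exp_mul_sub_mul_le_of_mul_exp_le {f : ℝ → ℝ} {κ x y : ℝ}
    (h : f x * exp (κ * x) ≤ f y * exp (κ * y)) : exp (κ * (x - y)) * f x ≤ f y := by
  have h' := mul_le_mul_of_nonneg_right h (exp_pos (-(κ * y))).le
  rwa [mul_assoc, mul_assoc, ← exp_add, ← exp_add, add_neg_cancel, exp_zero, mul_one,
    mul_comm, ← sub_eq_add_neg, ← mul_sub] at h'

variable {V : ℝ → ℝ} {s : Set ℝ} {C : ℝ}

lemma hasDerivWithinAt_derivWithin_mul_exp (hs : UniqueDiffOn ℝ s) (hV : ContDiffOn ℝ 2 V s)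
    (κ : ℝ) {t : ℝ} (ht : t ∈ s) :
    HasDerivWithinAt (fun u ↦ derivWithin V s u * exp (κ * u))
      ((iteratedDerivWithin 2 V s t + κ * derivWithin V s t) * exp (κ * t)) s t := by
  have hV' : DifferentiableWithinAt ℝ (derivWithin V s) s t :=
    (hV.derivWithin hs (by norm_num)).differentiableOn one_ne_zero t ht
  have hV'' : iteratedDerivWithin 2 V s = derivWithin (derivWithin V s) s := by
    rw [iteratedDerivWithin_succ', iteratedDerivWithin_one]
  refine (hV'.hasDerivWithinAt.mul
    ((hasDerivAt_id t).const_mul κ).exp.hasDerivWithinAt).congr_deriv ?_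
  rw [hV'', id]
  ring

variable (hs : Convex ℝ s) (hs' : UniqueDiffOn ℝ s) (hV : ContDiffOn ℝ 2 V s)
  (hmono : MonotoneOn V s)
  (hC : ∀ t ∈ s, |iteratedDerivWithin 2 V s t| ≤ C * |derivWithin V s t|)
include hs hs' hV hmono hC

lemma monotoneOn_derivWithin_mul_exp :
    MonotoneOn (fun u ↦ derivWithin V s u * exp (C * u)) s := by
  refine monotoneOn_of_hasDerivWithinAt_nonneg hs
    ((hV.continuousOn_derivWithin hs' (by norm_num)).mul (by fun_prop))
    (fun t ht ↦ (hasDerivWithinAt_derivWithin_mul_exp hs' hV C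
      (interior_subset ht)).mono interior_subset) fun t ht ↦ ?_
  have h := hC t (interior_subset ht)
  rw [abs_of_nonneg hmono.derivWithin_nonneg] at h
  exact mul_nonneg (by linarith [(abs_le.1 h).1]) (exp_pos _).le

lemma antitoneOn_derivWithin_mul_exp_neg :
    AntitoneOn (fun u ↦ derivWithin V s u * exp (-C * u)) s := by
  refine antitoneOn_of_hasDerivWithinAt_nonpos hs
    ((hV.continuousOn_derivWithin hs' (by norm_num)).mul (by fun_prop))
    (fun t ht ↦ (hasDerivWithinAt_derivWithin_mul_exp hs' hV (-C)
      (interior_subset ht)).mono interior_subset) fun t ht ↦ ?_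
  have h := hC t (interior_subset ht)
  rw [abs_of_nonneg hmono.derivWithin_nonneg] at h
  exact mul_nonpos_of_nonpos_of_nonneg (by linarith [(abs_le.1 h).2]) (exp_pos _).le

lemma exp_neg_mul_abs_sub_mul_derivWithin_le {x y : ℝ} (hx : x ∈ s) (hy : y ∈ s) :
    exp (-(C * |x - y|)) * derivWithin V s x ≤ derivWithin V s y := by
  rcases le_total x y with hxy | hyx
  · rw [abs_of_nonpos (sub_nonpos.2 hxy), mul_neg, neg_neg]
    exact exp_mul_sub_mul_le_of_mul_exp_le
      (monotoneOn_derivWithin_mul_exp hs hs' hV hmono hC hx hy hxy)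
  · rw [abs_of_nonneg (sub_nonneg.2 hyx), ← neg_mul]
    exact exp_mul_sub_mul_le_of_mul_exp_le
      (antitoneOn_derivWithin_mul_exp_neg hs hs' hV hmono hC hy hx hyx)

end Distortion

section Interval

variable {V : ℝ → ℝ} {p q C y : ℝ}

lemma exp_mul_derivWithin_mul_sub_le (hpq : p < q) (hV : ContDiffOn ℝ 2 V (Icc p q))
    (hmono : MonotoneOn V (Icc p q))
    (hC : ∀ t ∈ Icc p q, |iteratedDerivWithin 2 V (Icc p q) t| ≤
      C * |derivWithin V (Icc p q) t|)
    (hC0 : 0 ≤ C) (hy : y ∈ Icc p q) :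
    exp (-(C * (q - p))) * derivWithin V (Icc p q) y * (q - y) ≤ V q - V y ∧
      exp (-(C * (q - p))) * derivWithin V (Icc p q) y * (y - p) ≤ V y - V p := by
  have hlow : ∀ t ∈ interior (Icc p q),
      exp (-(C * (q - p))) * derivWithin V (Icc p q) y ≤ deriv V t := by
    intro t ht
    rw [interior_Icc] at ht
    rw [← derivWithin_of_mem_nhds (Icc_mem_nhds ht.1 ht.2)]
    have hdist : |y - t| ≤ q - p := abs_sub_le_of_le_of_le hy.1 hy.2 ht.1.le ht.2.le
    calc exp (-(C * (q - p))) * derivWithin V (Icc p q) y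
        ≤ exp (-(C * |y - t|)) * derivWithin V (Icc p q) y := by
          gcongr
          exact hmono.derivWithin_nonneg
      _ ≤ derivWithin V (Icc p q) t :=
          exp_neg_mul_abs_sub_mul_derivWithin_le (convex_Icc p q) (uniqueDiffOn_Icc hpq) hV
            hmono hC hy (Ioo_subset_Icc_self ht)
  have hmvt := (convex_Icc p q).mul_sub_le_image_sub_of_le_deriv hV.continuousOn
    ((hV.differentiableOn two_ne_zero).mono interior_subset) hlow
  exact ⟨hmvt y hy q (right_mem_Icc.2 hpq.le) hy.2, hmvt p (left_mem_Icc.2 hpq.le) y hy hy.1⟩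

lemma exp_mul_abs_derivWithin_mul_min_le (hpq : p < q) (hV : ContDiffOn ℝ 2 V (Icc p q))
    (hmono : MonotoneOn V (Icc p q) ∨ AntitoneOn V (Icc p q))
    (hmaps : MapsTo V (Icc p q) (Icc p q))
    (hC : ∀ t ∈ Icc p q, |iteratedDerivWithin 2 V (Icc p q) t| ≤
      C * |derivWithin V (Icc p q) t|)
    (hC0 : 0 ≤ C) (hy : y ∈ Icc p q) :
    exp (-(C * (q - p))) * |derivWithin V (Icc p q) y| * min (q - y) (y - p) ≤
      min (q - V y) (V y - p) := by
  have hL : 0 ≤ exp (-(C * (q - p))) * |derivWithin V (Icc p q) y| := by positivity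
  have hp := hmaps (left_mem_Icc.2 hpq.le)
  have hq := hmaps (right_mem_Icc.2 hpq.le)
  rw [mul_min_of_nonneg _ _ hL]
  rcases hmono with hmono | hanti
  · obtain ⟨hright, hleft⟩ := exp_mul_derivWithin_mul_sub_le hpq hV hmono hC hC0 hy
    rw [abs_of_nonneg hmono.derivWithin_nonneg]
    exact min_le_min (by linarith [hq.2]) (by linarith [hp.1])
  · obtain ⟨hright, hleft⟩ := exp_mul_derivWithin_mul_sub_le hpq hV.neg hanti.neg
      (by simpa only [iteratedDerivWithin_fun_neg, derivWithin.fun_neg, abs_neg] using hC)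
      hC0 hy
    rw [derivWithin.fun_neg] at hright hleft
    rw [abs_of_nonpos hanti.derivWithin_nonpos, min_comm (q - V y)]
    exact min_le_min (by linarith [hq.1]) (by linarith [hp.2])

end Interval

lemma mul_one_sub_sq_le_two_mul_one_sub_sq {L x y : ℝ} (hL : 0 ≤ L)
    (hx : x ∈ Icc (-1 : ℝ) 1) (hy : y ∈ Icc (-1 : ℝ) 1)
    (h : L * min (1 - y) (y + 1) ≤ min (1 - x) (x + 1)) :
    L * (1 - y ^ 2) ≤ 2 * (1 - x ^ 2) := by
  have hy' : 1 - y ^ 2 ≤ 2 * min (1 - y) (y + 1) := by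
    rcases min_cases (1 - y) (y + 1) with ⟨hm, -⟩ | ⟨hm, -⟩ <;> rw [hm] <;> nlinarith [hy.1, hy.2]
  have hx' : min (1 - x) (x + 1) ≤ 1 - x ^ 2 := by
    rcases min_cases (1 - x) (x + 1) with ⟨hm, hle⟩ | ⟨hm, hlt⟩ <;> rw [hm]
    · nlinarith [mul_nonneg (show 0 ≤ x by linarith) (sub_nonneg.2 hx.2)]
    · nlinarith [mul_nonneg (show 0 ≤ -x by linarith) (neg_le_iff_add_nonneg.1 hx.1)]
  nlinarith

lemma MonotoneOn.apply_endpoints_of_image_Icc {α β : Type*} [Preorder α] [PartialOrder β]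
    {f : α → β} {p q : α} {a b : β} (hf : MonotoneOn f (Icc p q)) (hpq : p ≤ q) (hab : a ≤ b)
    (himage : f '' Icc p q = Icc a b) : f p = a ∧ f q = b := by
  have hp : f p ∈ Icc a b := himage ▸ mem_image_of_mem f (left_mem_Icc.2 hpq)
  have hq : f q ∈ Icc a b := himage ▸ mem_image_of_mem f (right_mem_Icc.2 hpq)
  obtain ⟨s, hs, rfl⟩ : a ∈ f '' Icc p q := himage ▸ left_mem_Icc.2 hab
  obtain ⟨t, ht, rfl⟩ : b ∈ f '' Icc p q := himage ▸ right_mem_Icc.2 hab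
  exact ⟨le_antisymm (hf (left_mem_Icc.2 hpq) hs hs.1) hp.1,
    le_antisymm hq.2 (hf ht (right_mem_Icc.2 hpq) ht.2)⟩

lemma AntitoneOn.apply_endpoints_of_image_Icc {α β : Type*} [Preorder α] [PartialOrder β]
    {f : α → β} {p q : α} {a b : β} (hf : AntitoneOn f (Icc p q)) (hpq : p ≤ q) (hab : a ≤ b)
    (himage : f '' Icc p q = Icc a b) : f p = b ∧ f q = a :=
  hf.dual_right.apply_endpoints_of_image_Icc (a := OrderDual.toDual b) (b := OrderDual.toDual a)
    hpq hab (by rw [image_comp, himage, Equiv.image_eq_preimage_symm, Icc_toDual]; rfl)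

lemma mem_Ioo_of_apply_mem_Ioo {α β : Type*} [PartialOrder α] [PartialOrder β] {f : α → β}
    {p q y : α} {a b : β} (hf : MonotoneOn f (Icc p q) ∨ AntitoneOn f (Icc p q)) (hpq : p ≤ q)
    (himage : f '' Icc p q = Icc a b) (hy : y ∈ Icc p q) (hfy : f y ∈ Ioo a b) : y ∈ Ioo p q := by
  have hab : a ≤ b := (hfy.1.trans hfy.2).le
  have hends : f p ∉ Ioo a b ∧ f q ∉ Ioo a b := by
    rcases hf with hf | hf
    · obtain ⟨hp, hq⟩ := hf.apply_endpoints_of_image_Icc hpq hab himage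
      simp [hp, hq]
    · obtain ⟨hp, hq⟩ := hf.apply_endpoints_of_image_Icc hpq hab himage
      simp [hp, hq]
  refine ⟨hy.1.lt_of_ne ?_, hy.2.lt_of_ne ?_⟩ <;> rintro rfl
  exacts [hends.1 hfy, hends.2 hfy]

lemma derivWithin_mul_deriv_of_eventually_leftInverse {f v : ℝ → ℝ} {s : Set ℝ} {x : ℝ}
    (hf : DifferentiableAt ℝ f x) (hv : DifferentiableWithinAt ℝ v s (f x))
    (hinv : ∀ᶠ z in 𝓝 x, f z ∈ s ∧ v (f z) = z) : derivWithin v s (f x) * deriv f x = 1 :=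
  (hv.hasDerivWithinAt.comp_hasDerivAt x hf.hasDerivAt (hinv.mono fun _ h ↦ h.1)).unique
    ((hasDerivAt_id x).congr_of_eventuallyEq (hinv.mono fun _ h ↦ h.2))

lemma sqrt_le_sqrt_div_mul_abs {K μ u w d d' : ℝ} (hK : 0 ≤ K) (hu : 0 < u) (hd : d' * d = 1)
    (hμ : μ ≤ |d|) (h : K * |d'| * u ≤ 2 * w) : √(K * μ / 2) ≤ √(w / u) * |d| := by
  have habs : |d'| * |d| = 1 := by rw [← abs_mul, hd, abs_one]
  have key : K * μ / 2 ≤ w / u * d ^ 2 :=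
    calc K * μ / 2 ≤ K * |d| / 2 := by gcongr
      _ = K * |d'| * u / (2 * u) * |d| ^ 2 := by
          field_simp
          linear_combination (-(K * |d|)) * habs
      _ ≤ 2 * w / (2 * u) * |d| ^ 2 := by gcongr
      _ = w / u * d ^ 2 := by
          rw [sq_abs]
          field_simp
  calc √(K * μ / 2) ≤ √(w / u * d ^ 2) := sqrt_le_sqrt key
    _ = √(w / u) * |d| := by rw [sqrt_mul' _ (sq_nonneg d), sqrt_sq_eq_abs]

theorem expansion_implies_C_expansion_general
    {I : Type}
    (a b : I → ℝ) (ha : ∀ i, -1 ≤ a i) (hb : ∀ i, b i ≤ 1)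
    (v : I → ℝ → ℝ)
    (hreg : ∀ i, ContDiffOn ℝ 2 (v i) (Set.Icc (-1) 1))
    (hmono : ∀ i, StrictMonoOn (v i) (Set.Icc (-1) 1) ∨ StrictAntiOn (v i) (Set.Icc (-1) 1))
    (himage : ∀ i, v i '' Set.Icc (-1) 1 = Set.Icc (a i) (b i))
    (C : ℝ)
    (hC : ∀ i, ∀ x ∈ Set.Icc (-1 : ℝ) 1,
      |iteratedDerivWithin 2 (v i) (Set.Icc (-1) 1) x| ≤
        C * |derivWithin (v i) (Set.Icc (-1) 1) x|)
    (g : ℝ → ℝ)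
    (hg : ∀ i, ∀ x ∈ Set.Ioo (a i) (b i), g x ∈ Set.Icc (-1 : ℝ) 1 ∧ v i (g x) = x)
    (μ : ℝ) (hμ : 0 < μ)
    (hexp : ∀ x ∈ ⋃ i, Set.Ioo (a i) (b i), μ ≤ |deriv g x|) :
    ∀ x ∈ ⋃ i, Set.Ioo (a i) (b i),
      Real.sqrt (Real.exp (-2 * C) * μ / 2) ≤
        Real.sqrt ((1 - x ^ 2) / (1 - g x ^ 2)) * |deriv g x| := by
  intro x hx
  obtain ⟨i, hxi⟩ := mem_iUnion.1 hx
  obtain ⟨hy, hvy⟩ := hg i x hxi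
  have hg' : DifferentiableAt ℝ g x := by
    by_contra hnd
    have h := hexp x hx
    rw [deriv_zero_of_not_differentiableAt hnd, abs_zero] at h
    linarith
  have hinv : derivWithin (v i) (Icc (-1) 1) (g x) * deriv g x = 1 :=
    derivWithin_mul_deriv_of_eventually_leftInverse hg'
      ((hreg i).differentiableOn two_ne_zero _ hy)
      (eventually_of_mem (Ioo_mem_nhds hxi.1 hxi.2) (hg i))
  have hC0 : 0 ≤ C := nonneg_of_mul_nonneg_left ((abs_nonneg _).trans (hC i _ hy))
    (abs_pos.2 (left_ne_zero_of_mul_eq_one hinv))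
  have hmonoOn : MonotoneOn (v i) (Icc (-1) 1) ∨ AntitoneOn (v i) (Icc (-1) 1) :=
    (hmono i).imp StrictMonoOn.monotoneOn StrictAntiOn.antitoneOn
  have hmaps : MapsTo (v i) (Icc (-1) 1) (Icc (-1) 1) := fun t ht ↦
    Icc_subset_Icc (ha i) (hb i) (himage i ▸ mem_image_of_mem _ ht)
  have hyI : g x ∈ Ioo (-1) 1 :=
    mem_Ioo_of_apply_mem_Ioo hmonoOn (by norm_num) (himage i) hy (by rwa [hvy])
  have hdist :=
    exp_mul_abs_derivWithin_mul_min_le (by norm_num) (hreg i) hmonoOn hmaps (hC i) hC0 hy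
  simp only [hvy, sub_neg_eq_add] at hdist
  rw [show -(C * (1 + 1)) = -2 * C by ring] at hdist
  exact sqrt_le_sqrt_div_mul_abs (exp_pos _).le (by nlinarith [hyI.1, hyI.2]) hinv (hexp x hx)
    (mul_one_sub_sq_le_two_mul_one_sub_sq (by positivity) (hvy ▸ hmaps hy) hy hdist)

/-- A full-branch Markov map `g` of `[-1,1]` with `C²` inverse branches
`v_ι` (branch domains `O_ι = (a ι, b ι)`), distortion bound `|v_ι''/v_ι'| ≤ C`, and uniform
expansion `|g'| ≥ μ > 0` satisfies the C-expansion lower bound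
`√((1-x²)/(1-g(x)²)) |g'(x)| ≥ √(e^{-2C} μ / 2)` on its domain. -/
theorem expansion_implies_C_expansion
    {I : Type} [Countable I]
    (a b : I → ℝ) (hab : ∀ i, a i < b i) (ha : ∀ i, -1 ≤ a i) (hb : ∀ i, b i ≤ 1)
    (hdisj : ∀ i j, i ≠ j → Disjoint (Set.Ioo (a i) (b i)) (Set.Ioo (a j) (b j)))
    (v : I → ℝ → ℝ)
    (hreg : ∀ i, ContDiffOn ℝ 2 (v i) (Set.Icc (-1) 1))
    (hmono : ∀ i, StrictMonoOn (v i) (Set.Icc (-1) 1) ∨ StrictAntiOn (v i) (Set.Icc (-1) 1))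
    (himage : ∀ i, v i '' Set.Icc (-1) 1 = Set.Icc (a i) (b i))
    (C : ℝ)
    (hC : ∀ i, ∀ x ∈ Set.Icc (-1 : ℝ) 1,
      |iteratedDerivWithin 2 (v i) (Set.Icc (-1) 1) x| ≤
        C * |derivWithin (v i) (Set.Icc (-1) 1) x|)
    (g : ℝ → ℝ)
    (hg : ∀ i, ∀ x ∈ Set.Ioo (a i) (b i), g x ∈ Set.Icc (-1 : ℝ) 1 ∧ v i (g x) = x)
    (μ : ℝ) (hμ : 0 < μ)
    (hexp : ∀ x ∈ ⋃ i, Set.Ioo (a i) (b i), μ ≤ |deriv g x|) :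
    ∀ x ∈ ⋃ i, Set.Ioo (a i) (b i),
      Real.sqrt (Real.exp (-2 * C) * μ / 2) ≤
        Real.sqrt ((1 - x ^ 2) / (1 - g x ^ 2)) * |deriv g x| :=
  expansion_implies_C_expansion_general a b ha hb v hreg hmono himage C hC g hg μ hμ hexp
end

section
/- Let I be a countable index set, let (O_ι)_{ι∈I} be pairwise disjoint nonempty open subintervals of (−1,1), and for each ι let v_ι : [−1,1] → [−1,1] be a C² strictly monotone map with v_ι([−1,1]) equal to the closure of O_ι and with |v_ι''(x)/v_ι'(x)| ≤ C₁ for all x ∈ [−1,1]. Let g : ⋃_ι O_ι → (−1,1) be the full-branch Markov map whose restriction to O_ι is the inverse of v_ι, and assume g is uniformly C-expanding with parameter λ̌ > 1, i.e. √(1 − x²) · |g'(x)| ≥ λ̌ · √(1 − g(x)²) for all x ∈ ⋃_ι O_ι. Then for every n ≥ 1 and every x such that x, g(x), …, g^{n−1}(x) all lie in ⋃_ι O_ι: |(gⁿ)'(x)| ≥ (2/π) · e^{−π C₁ λ̌/(λ̌ − 1)} · λ̌ⁿ. In particular gⁿ is uniformly expanding for all sufficiently large n. -/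
open Set Real Topology

/-!
In the angular coordinate `θ = arccos y` the C-expansion condition says that every inverse
branch `v_ι` contracts by the factor `λ̌⁻¹`, so the inverse branch `W` of `gⁿ` along an orbit maps
`[-1, 1]` (of angular length `π`) onto an interval of length at most `π λ̌⁻ⁿ`, and by the mean
value theorem `|W'| ≤ (π / 2) λ̌⁻ⁿ` somewhere. The distortion bound `|v''| ≤ C₁ |v'|` integrates
to `|v'(p)| ≤ |v'(q)| e^{C₁ |p - q|}`; summed over the geometrically shrinking images of the
successive branches it costs at most the factor `e^{π C₁ λ̌ / (λ̌ - 1)}` across all of `[-1, 1]`.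
Since `(gⁿ)'(x) = 1 / W'(gⁿ x)`, the bound follows.
-/

theorem abs_sub_le_abs_arccos_sub {p q : ℝ} (hp : p ∈ Icc (-1 : ℝ) 1) (hq : q ∈ Icc (-1 : ℝ) 1) :
    |p - q| ≤ |arccos p - arccos q| := by
  simpa only [cos_arccos hp.1 hp.2, cos_arccos hq.1 hq.2] using
    abs_cos_sub_cos_le (arccos p) (arccos q)

theorem abs_le_abs_mul_exp_of_abs_deriv_le {f f' : ℝ → ℝ} {a b K : ℝ}
    (hf : ∀ t ∈ Icc a b, HasDerivWithinAt f (f' t) (Icc a b) t)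
    (hbound : ∀ t ∈ Icc a b, |f' t| ≤ K * |f t|) {p q : ℝ} (hp : p ∈ Icc a b)
    (hq : q ∈ Icc a b) : |f p| ≤ |f q| * exp (K * |p - q|) := by
  wlog hqp : q ≤ p generalizing f f' a b p q
  · have hneg : MapsTo (fun t => -t) (Icc (-b) (-a)) (Icc a b) :=
      fun t ht => ⟨by linarith [ht.2], by linarith [ht.1]⟩
    have := this (f := fun t => f (-t)) (f' := fun t => f' (-t) * (-1)) (a := -b) (b := -a)
      (fun t ht => (hf (-t) (hneg ht)).comp t (hasDerivWithinAt_neg t _) hneg)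
      (fun t ht => by simpa using hbound (-t) (hneg ht))
      (p := -p) (q := -q) ⟨by linarith [hp.2], by linarith [hp.1]⟩
      ⟨by linarith [hq.2], by linarith [hq.1]⟩ (by linarith)
    simpa [abs_sub_comm, neg_add_eq_sub] using this
  have hsub : Icc q p ⊆ Icc a b := Icc_subset_Icc hq.1 hp.2
  have hright : ∀ t ∈ Ico q p, HasDerivWithinAt f (f' t) (Ici t) t := fun t ht =>
    (hf t (hsub (Ico_subset_Icc_self ht))).mono_of_mem_nhdsWithin <| Filter.mem_of_superset
      (Icc_mem_nhdsGE ht.2) (Icc_subset_Icc (hsub (Ico_subset_Icc_self ht)).1 hp.2)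
  have hgron := norm_le_gronwallBound_of_norm_deriv_right_le (ε := 0)
    (fun t ht => (hf t (hsub ht)).continuousWithinAt.mono hsub) hright le_rfl
    (fun t ht => by simpa using hbound t (hsub (Ico_subset_Icc_self ht))) p ⟨hqp, le_rfl⟩
  rwa [gronwallBound_ε0, Real.norm_eq_abs, Real.norm_eq_abs, ← abs_of_nonneg (sub_nonneg.2 hqp)]
    at hgron

theorem image_Ioo_eq_Ioo_of_image_Icc_eq {α β : Type*} [LinearOrder α] [LinearOrder β]
    {f : α → β} {a b : α} {A B : β} (hab : a ≤ b)
    (hf : StrictMonoOn f (Icc a b) ∨ StrictAntiOn f (Icc a b))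
    (himage : f '' Icc a b = Icc A B) : f '' Ioo a b = Ioo A B := by
  have hAB : A ≤ B := nonempty_Icc.1 (himage ▸ (nonempty_Icc.2 hab).image f)
  have hends : f '' {a, b} = {A, B} := by
    rcases hf with hf | hf
    · have ha := (hf.monotoneOn.map_isLeast (isLeast_Icc hab)).unique (himage ▸ isLeast_Icc hAB)
      have hb := (hf.monotoneOn.map_isGreatest (isGreatest_Icc hab)).unique
        (himage ▸ isGreatest_Icc hAB)
      simp [image_pair, ha, hb]
    · have ha := (hf.antitoneOn.map_isLeast (isLeast_Icc hab)).unique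
        (himage ▸ isGreatest_Icc hAB)
      have hb := (hf.antitoneOn.map_isGreatest (isGreatest_Icc hab)).unique
        (himage ▸ isLeast_Icc hAB)
      simp [image_pair, ha, hb, pair_comm]
  have hinj : InjOn f (Icc a b) := hf.elim StrictMonoOn.injOn StrictAntiOn.injOn
  rw [← Icc_sdiff_both, hinj.image_sdiff_subset (pair_subset (left_mem_Icc.2 hab)
    (right_mem_Icc.2 hab)), himage, hends, Icc_sdiff_both]

theorem abs_arccos_sub_le_of_abs_deriv_mul_sqrt_le {V V' : ℝ → ℝ} {ρ : ℝ}
    (hcont : ContinuousOn V (Icc (-1) 1)) (hderiv : ∀ y ∈ Ioo (-1 : ℝ) 1, HasDerivAt V (V' y) y)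
    (hmaps : MapsTo V (Ioo (-1) 1) (Ioo (-1) 1))
    (hCE : ∀ y ∈ Ioo (-1 : ℝ) 1, |V' y| * √(1 - y ^ 2) ≤ ρ * √(1 - V y ^ 2))
    {y z : ℝ} (hy : y ∈ Icc (-1 : ℝ) 1) (hz : z ∈ Icc (-1 : ℝ) 1) :
    |arccos (V y) - arccos (V z)| ≤ ρ * |arccos y - arccos z| := by
  wlog hyz : y < z generalizing y z
  · rcases (not_lt.1 hyz).lt_or_eq with hzy | rfl
    · rw [abs_sub_comm, abs_sub_comm (arccos y)]
      exact this hz hy hzy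
    · simp
  have hsub : Icc y z ⊆ Icc (-1) 1 := Icc_subset_Icc hy.1 hz.2
  have hIoo : Ioo y z ⊆ Ioo (-1) 1 := Ioo_subset_Ioo hy.1 hz.2
  obtain ⟨c, hc, hcauchy⟩ := exists_ratio_hasDerivAt_eq_ratio_slope (fun t => arccos (V t))
    (fun t => -(1 / √(1 - V t ^ 2)) * V' t) hyz
    (continuous_arccos.comp_continuousOn (hcont.mono hsub))
    (fun t ht => (hasDerivAt_arccos (hmaps (hIoo ht)).1.ne' (hmaps (hIoo ht)).2.ne).comp t
      (hderiv t (hIoo ht)))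
    arccos (fun t => -(1 / √(1 - t ^ 2))) continuous_arccos.continuousOn
    (fun t ht => hasDerivAt_arccos (hIoo ht).1.ne' (hIoo ht).2.ne)
  have hc' := hIoo hc
  have hs : 0 < √(1 - c ^ 2) := sqrt_pos.2 (by nlinarith [hc'.1, hc'.2])
  have ht : 0 < √(1 - V c ^ 2) := sqrt_pos.2 (by nlinarith [(hmaps hc').1, (hmaps hc').2])
  have heq : arccos (V z) - arccos (V y) =
      (arccos z - arccos y) * (V' c * √(1 - c ^ 2) / √(1 - V c ^ 2)) := by
    field_simp at hcauchy ⊢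
    linarith
  rw [abs_sub_comm, heq, abs_mul, abs_sub_comm, mul_comm, abs_div, abs_mul,
    abs_of_pos hs, abs_of_pos ht]
  gcongr
  exact (div_le_iff₀ ht).2 (hCE c hc')

structure IsAngularContraction (W W' : ℝ → ℝ) (ρ K : ℝ) : Prop where
  mapsTo : MapsTo W (Icc (-1) 1) (Icc (-1) 1)
  hasDerivWithinAt : ∀ y ∈ Icc (-1 : ℝ) 1, HasDerivWithinAt W (W' y) (Icc (-1) 1) y
  abs_arccos_sub_le : ∀ y ∈ Icc (-1 : ℝ) 1, ∀ z ∈ Icc (-1 : ℝ) 1,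
    |arccos (W y) - arccos (W z)| ≤ ρ * |arccos y - arccos z|
  abs_deriv_le : ∀ y ∈ Icc (-1 : ℝ) 1, ∀ z ∈ Icc (-1 : ℝ) 1,
    |W' y| ≤ |W' z| * exp (K * |arccos y - arccos z|)

theorem isAngularContraction_id : IsAngularContraction id (fun _ => 1) 1 0 where
  mapsTo := mapsTo_id _
  hasDerivWithinAt y _ := hasDerivWithinAt_id y _
  abs_arccos_sub_le y _ z _ := by simp
  abs_deriv_le y _ z _ := by simp

namespace IsAngularContraction

variable {V V' W W' : ℝ → ℝ} {ρ ρ' C K : ℝ}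

theorem comp (hV : IsAngularContraction V V' ρ' C) (hW : IsAngularContraction W W' ρ K)
    (hρ' : 0 ≤ ρ') (hC : 0 ≤ C) :
    IsAngularContraction (V ∘ W) (fun y => V' (W y) * W' y) (ρ' * ρ) (C * ρ + K) where
  mapsTo := hV.mapsTo.comp hW.mapsTo
  hasDerivWithinAt y hy :=
    (hV.hasDerivWithinAt (W y) (hW.mapsTo hy)).comp y (hW.hasDerivWithinAt y hy) hW.mapsTo
  abs_arccos_sub_le y hy z hz := by
    rw [mul_assoc]
    exact (hV.abs_arccos_sub_le _ (hW.mapsTo hy) _ (hW.mapsTo hz)).trans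
      (mul_le_mul_of_nonneg_left (hW.abs_arccos_sub_le y hy z hz) hρ')
  abs_deriv_le y hy z hz := by
    have hWyz := hW.abs_arccos_sub_le y hy z hz
    calc |V' (W y) * W' y|
        = |V' (W y)| * |W' y| := abs_mul _ _
      _ ≤ (|V' (W z)| * exp (C * |arccos (W y) - arccos (W z)|)) *
          (|W' z| * exp (K * |arccos y - arccos z|)) :=
        mul_le_mul (hV.abs_deriv_le _ (hW.mapsTo hy) _ (hW.mapsTo hz))
          (hW.abs_deriv_le y hy z hz) (abs_nonneg _) (by positivity)
      _ ≤ (|V' (W z)| * exp (C * (ρ * |arccos y - arccos z|))) *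
          (|W' z| * exp (K * |arccos y - arccos z|)) := by
        gcongr
      _ = |V' (W z) * W' z| * exp ((C * ρ + K) * |arccos y - arccos z|) := by
        rw [abs_mul, add_mul, exp_add, mul_assoc C]
        ring

theorem abs_deriv_le_pi_mul (hW : IsAngularContraction W W' ρ K) (hK : 0 ≤ K) {y : ℝ}
    (hy : y ∈ Icc (-1 : ℝ) 1) : |W' y| ≤ π * ρ / 2 * exp (π * K) := by
  have hm1 : (-1 : ℝ) ∈ Icc (-1 : ℝ) 1 := by norm_num
  have h1 : (1 : ℝ) ∈ Icc (-1 : ℝ) 1 := by norm_num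
  have hdiam : |W 1 - W (-1)| ≤ π * ρ :=
    calc |W 1 - W (-1)|
        ≤ |arccos (W 1) - arccos (W (-1))| :=
          abs_sub_le_abs_arccos_sub (hW.mapsTo h1) (hW.mapsTo hm1)
      _ ≤ ρ * |arccos 1 - arccos (-1)| := hW.abs_arccos_sub_le 1 h1 (-1) hm1
      _ = π * ρ := by simp [abs_of_pos pi_pos, mul_comm]
  obtain ⟨c, hc, hslope⟩ := exists_hasDerivAt_eq_slope W W' (by norm_num : (-1 : ℝ) < 1)
    (fun t ht => (hW.hasDerivWithinAt t ht).continuousWithinAt)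
    (fun t ht => (hW.hasDerivWithinAt t (Ioo_subset_Icc_self ht)).hasDerivAt
      (Icc_mem_nhds ht.1 ht.2))
  have hWc : |W' c| ≤ π * ρ / 2 := by
    rw [hslope, abs_div, show (1 : ℝ) - -1 = 2 by norm_num, abs_two]
    linarith
  have hangle : |arccos y - arccos c| ≤ π := abs_sub_le_iff.2
    ⟨by linarith [arccos_nonneg c, arccos_le_pi y], by linarith [arccos_nonneg y, arccos_le_pi c]⟩
  calc |W' y| ≤ |W' c| * exp (K * |arccos y - arccos c|) :=
        hW.abs_deriv_le y hy c (Ioo_subset_Icc_self hc)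
    _ ≤ π * ρ / 2 * exp (π * K) :=
        mul_le_mul hWc
          (exp_le_exp.2 (by rw [mul_comm π]; exact mul_le_mul_of_nonneg_left hangle hK))
          (exp_pos _).le ((abs_nonneg _).trans hWc)

end IsAngularContraction

structure IsInverseBranch (V : ℝ → ℝ) (A B C₁ : ℝ) : Prop where
  contDiffOn : ContDiffOn ℝ 2 V (Icc (-1) 1)
  strictMonoOn_or_strictAntiOn : StrictMonoOn V (Icc (-1) 1) ∨ StrictAntiOn V (Icc (-1) 1)
  image_Icc : V '' Icc (-1) 1 = Icc A B
  abs_iteratedDerivWithin_two_le : ∀ x ∈ Icc (-1 : ℝ) 1,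
    |iteratedDerivWithin 2 V (Icc (-1) 1) x| ≤ C₁ * |derivWithin V (Icc (-1) 1) x|

namespace IsInverseBranch

variable {V g : ℝ → ℝ} {A B C₁ lam y : ℝ}

theorem injOn (hV : IsInverseBranch V A B C₁) : InjOn V (Icc (-1) 1) :=
  hV.strictMonoOn_or_strictAntiOn.elim StrictMonoOn.injOn StrictAntiOn.injOn

theorem image_Ioo (hV : IsInverseBranch V A B C₁) : V '' Ioo (-1) 1 = Ioo A B :=
  image_Ioo_eq_Ioo_of_image_Icc_eq (by norm_num) hV.strictMonoOn_or_strictAntiOn hV.image_Icc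

theorem hasDerivWithinAt (hV : IsInverseBranch V A B C₁) (hy : y ∈ Icc (-1 : ℝ) 1) :
    HasDerivWithinAt V (derivWithin V (Icc (-1) 1) y) (Icc (-1) 1) y :=
  (hV.contDiffOn.differentiableOn (by norm_num) y hy).hasDerivWithinAt

theorem hasStrictDerivAt (hV : IsInverseBranch V A B C₁) (hy : y ∈ Ioo (-1 : ℝ) 1) :
    HasStrictDerivAt V (derivWithin V (Icc (-1) 1) y) y := by
  have hJ : Icc (-1 : ℝ) 1 ∈ 𝓝 y := Icc_mem_nhds hy.1 hy.2
  rw [derivWithin_of_mem_nhds hJ]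
  exact (hV.contDiffOn.contDiffAt hJ).hasStrictDerivAt (by norm_num)

theorem abs_derivWithin_le_mul_exp (hV : IsInverseBranch V A B C₁) {p q : ℝ}
    (hp : p ∈ Icc (-1 : ℝ) 1) (hq : q ∈ Icc (-1 : ℝ) 1) :
    |derivWithin V (Icc (-1) 1) p| ≤ |derivWithin V (Icc (-1) 1) q| * exp (C₁ * |p - q|) := by
  have hderiv2 : ∀ t ∈ Icc (-1 : ℝ) 1, HasDerivWithinAt (derivWithin V (Icc (-1) 1))
      (iteratedDerivWithin 2 V (Icc (-1) 1) t) (Icc (-1) 1) t := by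
    intro t ht
    rw [iteratedDerivWithin_succ', iteratedDerivWithin_one]
    exact ((hV.contDiffOn.derivWithin (uniqueDiffOn_Icc (by norm_num)) (m := 1)
      (by norm_num)).differentiableOn (by norm_num) t ht).hasDerivWithinAt
  exact abs_le_abs_mul_exp_of_abs_deriv_le hderiv2 hV.abs_iteratedDerivWithin_two_le hp hq

theorem derivWithin_ne_zero (hV : IsInverseBranch V A B C₁) (hy : y ∈ Icc (-1 : ℝ) 1) :
    derivWithin V (Icc (-1) 1) y ≠ 0 := by
  intro hzero
  have hconst := constant_of_derivWithin_zero (hV.contDiffOn.differentiableOn (by norm_num))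
    (fun t ht => by
      simpa [hzero] using hV.abs_derivWithin_le_mul_exp (Ico_subset_Icc_self ht) hy)
  have := hV.injOn (right_mem_Icc.2 (by norm_num)) (left_mem_Icc.2 (by norm_num))
    (hconst 1 (right_mem_Icc.2 (by norm_num)))
  norm_num at this

theorem nonneg (hV : IsInverseBranch V A B C₁) : 0 ≤ C₁ := by
  have h0 : (0 : ℝ) ∈ Icc (-1 : ℝ) 1 := by norm_num
  exact nonneg_of_mul_nonneg_left ((abs_nonneg _).trans (hV.abs_iteratedDerivWithin_two_le 0 h0))
    (abs_pos.2 (hV.derivWithin_ne_zero h0))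

theorem leftInvOn (hV : IsInverseBranch V A B C₁)
    (hg : ∀ x ∈ Ioo A B, g x ∈ Icc (-1 : ℝ) 1 ∧ V (g x) = x) : LeftInvOn g V (Ioo (-1) 1) := by
  intro y hy
  have hVy : V y ∈ Ioo A B := hV.image_Ioo ▸ mem_image_of_mem V hy
  exact hV.injOn (hg _ hVy).1 (Ioo_subset_Icc_self hy) (hg _ hVy).2

theorem inverse_mem_Ioo (hV : IsInverseBranch V A B C₁)
    (hg : ∀ x ∈ Ioo A B, g x ∈ Icc (-1 : ℝ) 1 ∧ V (g x) = x) {x : ℝ} (hx : x ∈ Ioo A B) :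
    g x ∈ Ioo (-1 : ℝ) 1 := by
  obtain ⟨y, hy, rfl⟩ := hV.image_Ioo.symm ▸ hx
  rwa [hV.leftInvOn hg hy]

theorem hasDerivAt_inverse (hV : IsInverseBranch V A B C₁)
    (hg : ∀ x ∈ Ioo A B, g x ∈ Icc (-1 : ℝ) 1 ∧ V (g x) = x) {x : ℝ} (hx : x ∈ Ioo A B) :
    HasDerivAt g (derivWithin V (Icc (-1) 1) (g x))⁻¹ x := by
  have hgx := hV.inverse_mem_Ioo hg hx
  have hleft : ∀ᶠ y in 𝓝 (g x), g (V y) = y := by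
    filter_upwards [Ioo_mem_nhds hgx.1 hgx.2] with y hy using hV.leftInvOn hg hy
  have := (hV.hasStrictDerivAt hgx).to_local_left_inverse
    (hV.derivWithin_ne_zero (Ioo_subset_Icc_self hgx)) hleft
  rw [(hg x hx).2] at this
  exact this.hasDerivAt

theorem abs_derivWithin_mul_sqrt_le (hV : IsInverseBranch V A B C₁)
    (hg : ∀ x ∈ Ioo A B, g x ∈ Icc (-1 : ℝ) 1 ∧ V (g x) = x)
    (hCE : ∀ x ∈ Ioo A B, lam * √(1 - g x ^ 2) ≤ √(1 - x ^ 2) * |deriv g x|)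
    (hlam : 0 < lam) (hy : y ∈ Ioo (-1 : ℝ) 1) :
    |derivWithin V (Icc (-1) 1) y| * √(1 - y ^ 2) ≤ lam⁻¹ * √(1 - V y ^ 2) := by
  have hVy : V y ∈ Ioo A B := hV.image_Ioo ▸ mem_image_of_mem V hy
  have hgVy := hV.leftInvOn hg hy
  have hCEy := hCE (V y) hVy
  rw [(hV.hasDerivAt_inverse hg hVy).deriv, hgVy, abs_inv] at hCEy
  have hpos : 0 < |derivWithin V (Icc (-1) 1) y| :=
    abs_pos.2 (hV.derivWithin_ne_zero (Ioo_subset_Icc_self hy))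
  rw [← div_eq_mul_inv] at hCEy
  rw [inv_mul_eq_div, le_div_iff₀ hlam]
  calc |derivWithin V (Icc (-1) 1) y| * √(1 - y ^ 2) * lam
      = |derivWithin V (Icc (-1) 1) y| * (lam * √(1 - y ^ 2)) := by ring
    _ ≤ |derivWithin V (Icc (-1) 1) y| * (√(1 - V y ^ 2) / |derivWithin V (Icc (-1) 1) y|) :=
        mul_le_mul_of_nonneg_left hCEy hpos.le
    _ = √(1 - V y ^ 2) := by field_simp

theorem isAngularContraction (hV : IsInverseBranch V A B C₁) (hA : -1 ≤ A) (hB : B ≤ 1)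
    (hg : ∀ x ∈ Ioo A B, g x ∈ Icc (-1 : ℝ) 1 ∧ V (g x) = x)
    (hCE : ∀ x ∈ Ioo A B, lam * √(1 - g x ^ 2) ≤ √(1 - x ^ 2) * |deriv g x|)
    (hlam : 0 < lam) : IsAngularContraction V (derivWithin V (Icc (-1) 1)) lam⁻¹ C₁ where
  mapsTo y hy := by
    have hVy : V y ∈ Icc A B := hV.image_Icc ▸ mem_image_of_mem V hy
    exact ⟨hA.trans hVy.1, hVy.2.trans hB⟩
  hasDerivWithinAt _ := hV.hasDerivWithinAt
  abs_arccos_sub_le _ hy _ hz := abs_arccos_sub_le_of_abs_deriv_mul_sqrt_le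
    hV.contDiffOn.continuousOn (fun _ ht => (hV.hasStrictDerivAt ht).hasDerivAt)
    (fun t ht => Ioo_subset_Ioo hA hB (hV.image_Ioo ▸ mem_image_of_mem V ht))
    (fun _ ht => hV.abs_derivWithin_mul_sqrt_le hg hCE hlam ht) hy hz
  abs_deriv_le _ hy _ hz := (hV.abs_derivWithin_le_mul_exp hy hz).trans <|
    mul_le_mul_of_nonneg_left
      (exp_le_exp.2 (mul_le_mul_of_nonneg_left (abs_sub_le_abs_arccos_sub hy hz) hV.nonneg))
      (abs_nonneg _)

end IsInverseBranch

def HasAngularInverseBranches (g : ℝ → ℝ) (U : Set ℝ) (ρ C : ℝ) : Prop :=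
  ∀ x ∈ U, ∃ V V' : ℝ → ℝ, IsAngularContraction V V' ρ C ∧ V (g x) = x ∧
    HasDerivAt g (V' (g x))⁻¹ x ∧ V' (g x) ≠ 0

theorem exists_isAngularContraction_iterate {g : ℝ → ℝ} {U : Set ℝ} {ρ C : ℝ} (hρ : 0 ≤ ρ)
    (hC : 0 ≤ C) (hbranch : HasAngularInverseBranches g U ρ C) (n : ℕ) {x : ℝ}
    (horb : ∀ m < n, g^[m] x ∈ U) :
    ∃ W W' : ℝ → ℝ, IsAngularContraction W W' (ρ ^ n) (C * ∑ j ∈ Finset.range n, ρ ^ j) ∧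
      W (g^[n] x) = x ∧ HasDerivAt (g^[n]) (W' (g^[n] x))⁻¹ x ∧ W' (g^[n] x) ≠ 0 := by
  induction n generalizing x with
  | zero => exact ⟨id, fun _ => 1, by simpa using isAngularContraction_id, rfl,
      by simpa using hasDerivAt_id x, one_ne_zero⟩
  | succ n ih =>
    obtain ⟨V, V', hV, hVx, hgx, hV'x⟩ := hbranch x (horb 0 n.succ_pos)
    obtain ⟨W, W', hW, hWx, hgnx, hW'x⟩ :=
      ih (x := g x) fun m hm => by simpa using horb (m + 1) (Nat.succ_lt_succ hm)
    rw [Function.iterate_succ_apply]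
    refine ⟨V ∘ W, fun y => V' (W y) * W' y, ?_, by simp [hWx, hVx], ?_, ?_⟩
    · convert hV.comp hW hρ hC using 1
      · ring
      · rw [Finset.sum_range_succ]
        ring
    · rw [Function.iterate_succ]
      dsimp only
      rw [hWx, mul_inv_rev]
      exact hgnx.comp x hgx
    · dsimp only
      rw [hWx]
      exact mul_ne_zero hV'x hW'x

theorem le_abs_deriv_iterate {g : ℝ → ℝ} {U : Set ℝ} {lam C : ℝ} (hlam : 1 < lam) (hC : 0 ≤ C)
    (hbranch : HasAngularInverseBranches g U lam⁻¹ C) (hgU : MapsTo g U (Icc (-1) 1))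
    {n : ℕ} (hn : 1 ≤ n) {x : ℝ} (horb : ∀ m < n, g^[m] x ∈ U) :
    2 / π * exp (-π * C * lam / (lam - 1)) * lam ^ n ≤ |deriv (g^[n]) x| := by
  have hlam₀ : 0 < lam := one_pos.trans hlam
  obtain ⟨W, W', hW, -, hderiv, hne⟩ :=
    exists_isAngularContraction_iterate (inv_nonneg.2 hlam₀.le) hC hbranch n horb
  have hgn : g^[n] x ∈ Icc (-1 : ℝ) 1 := by
    obtain ⟨k, rfl⟩ := Nat.exists_eq_add_of_le' hn
    rw [Function.iterate_succ_apply']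
    exact hgU (horb k k.lt_succ_self)
  have hsum : ∑ j ∈ Finset.range n, lam⁻¹ ^ j ≤ lam / (lam - 1) := by
    have h := geom_sum_Ico_le_of_lt_one (m := 0) (n := n) (inv_nonneg.2 hlam₀.le)
      (inv_lt_one_of_one_lt₀ hlam)
    rw [← Finset.range_eq_Ico, pow_zero] at h
    refine h.trans_eq ?_
    have hlam₁ : lam - 1 ≠ 0 := by linarith
    field_simp
  have hW' : |W' (g^[n] x)| ≤ π / 2 * exp (π * C * lam / (lam - 1)) * lam⁻¹ ^ n :=
    calc |W' (g^[n] x)|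
        ≤ π * lam⁻¹ ^ n / 2 * exp (π * (C * ∑ j ∈ Finset.range n, lam⁻¹ ^ j)) :=
          hW.abs_deriv_le_pi_mul (mul_nonneg hC (Finset.sum_nonneg fun _ _ => by positivity)) hgn
      _ ≤ π * lam⁻¹ ^ n / 2 * exp (π * (C * (lam / (lam - 1)))) := by gcongr
      _ = π / 2 * exp (π * C * lam / (lam - 1)) * lam⁻¹ ^ n := by ring_nf
  rw [hderiv.deriv, abs_inv]
  calc 2 / π * exp (-π * C * lam / (lam - 1)) * lam ^ n
      = (π / 2 * exp (π * C * lam / (lam - 1)) * lam⁻¹ ^ n)⁻¹ := by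
        rw [neg_mul, neg_mul, neg_div, exp_neg, inv_pow]
        field_simp
    _ ≤ |W' (g^[n] x)|⁻¹ := inv_anti₀ (abs_pos.2 hne) hW'

theorem C_expansion_implies_expansion_of_iterates_general
    {I : Type}
    (a b : I → ℝ) (ha : ∀ i, -1 ≤ a i) (hb : ∀ i, b i ≤ 1)
    (v : I → ℝ → ℝ)
    (hreg : ∀ i, ContDiffOn ℝ 2 (v i) (Set.Icc (-1) 1))
    (hmono : ∀ i, StrictMonoOn (v i) (Set.Icc (-1) 1) ∨ StrictAntiOn (v i) (Set.Icc (-1) 1))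
    (himage : ∀ i, v i '' Set.Icc (-1) 1 = Set.Icc (a i) (b i))
    (C₁ : ℝ)
    (hC : ∀ i, ∀ x ∈ Set.Icc (-1 : ℝ) 1,
      |iteratedDerivWithin 2 (v i) (Set.Icc (-1) 1) x| ≤
        C₁ * |derivWithin (v i) (Set.Icc (-1) 1) x|)
    (g : ℝ → ℝ)
    (hg : ∀ i, ∀ x ∈ Set.Ioo (a i) (b i), g x ∈ Set.Icc (-1 : ℝ) 1 ∧ v i (g x) = x)
    (lam : ℝ) (hlam : 1 < lam)
    (hCE : ∀ x ∈ ⋃ i, Set.Ioo (a i) (b i),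
      lam * Real.sqrt (1 - g x ^ 2) ≤ Real.sqrt (1 - x ^ 2) * |deriv g x|) :
    (∀ n : ℕ, 1 ≤ n → ∀ x : ℝ,
      (∀ m < n, g^[m] x ∈ ⋃ i, Set.Ioo (a i) (b i)) →
      (2 / Real.pi) * Real.exp (-Real.pi * C₁ * lam / (lam - 1)) * lam ^ n ≤
        |deriv (g^[n]) x|) ∧
    ∃ n₀ : ℕ, ∀ n : ℕ, n₀ ≤ n → ∀ x : ℝ,
      (∀ m < n, g^[m] x ∈ ⋃ i, Set.Ioo (a i) (b i)) →
      1 < |deriv (g^[n]) x| := by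
  have hV i : IsInverseBranch (v i) (a i) (b i) C₁ := ⟨hreg i, hmono i, himage i, hC i⟩
  have hbranch : HasAngularInverseBranches g (⋃ i, Ioo (a i) (b i)) lam⁻¹ C₁ := by
    intro x hx
    obtain ⟨i, hi⟩ := mem_iUnion.1 hx
    exact ⟨v i, _, (hV i).isAngularContraction (ha i) (hb i) (hg i)
      (fun y hy => hCE y (mem_iUnion.2 ⟨i, hy⟩)) (one_pos.trans hlam), (hg i x hi).2,
      (hV i).hasDerivAt_inverse (hg i) hi, (hV i).derivWithin_ne_zero (hg i x hi).1⟩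
  have hgU : MapsTo g (⋃ i, Ioo (a i) (b i)) (Icc (-1) 1) := by
    intro x hx
    obtain ⟨i, hi⟩ := mem_iUnion.1 hx
    exact (hg i x hi).1
  have hexpand : ∀ n : ℕ, 1 ≤ n → ∀ x : ℝ, (∀ m < n, g^[m] x ∈ ⋃ i, Ioo (a i) (b i)) →
      2 / π * exp (-π * C₁ * lam / (lam - 1)) * lam ^ n ≤ |deriv (g^[n]) x| := by
    intro n hn x horb
    obtain ⟨i, -⟩ := mem_iUnion.1 (horb 0 hn)
    exact le_abs_deriv_iterate hlam (hV i).nonneg hbranch hgU hn horb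
  refine ⟨hexpand, ?_⟩
  have hK : 0 < 2 / π * exp (-π * C₁ * lam / (lam - 1)) := by positivity
  obtain ⟨n₀, hn₀⟩ := Filter.eventually_atTop.1
    (((tendsto_pow_atTop_atTop_of_one_lt hlam).const_mul_atTop hK).eventually_gt_atTop 1)
  exact ⟨max n₀ 1, fun n hn x horb =>
    (hn₀ n (le_of_max_le_left hn)).trans_le (hexpand n (le_of_max_le_right hn) x horb)⟩

/-- A full-branch Markov map `g` of `[-1,1]` with `C²` inverse branches
`v_ι` (branch domains `O_ι = (a ι, b ι)`), distortion bound `|v_ι''/v_ι'| ≤ C₁`, and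
uniform C-expansion parameter `λ̌ > 1` satisfies
`|(gⁿ)'(x)| ≥ (2/π) e^{-π C₁ λ̌/(λ̌-1)} λ̌ⁿ` whenever the orbit `x, g x, …, g^{n-1} x` stays
in the branch domains; in particular `gⁿ` is uniformly expanding for all large `n`. -/
theorem C_expansion_implies_expansion_of_iterates
    {I : Type} [Countable I]
    (a b : I → ℝ) (hab : ∀ i, a i < b i) (ha : ∀ i, -1 ≤ a i) (hb : ∀ i, b i ≤ 1)
    (hdisj : ∀ i j, i ≠ j → Disjoint (Set.Ioo (a i) (b i)) (Set.Ioo (a j) (b j)))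
    (v : I → ℝ → ℝ)
    (hreg : ∀ i, ContDiffOn ℝ 2 (v i) (Set.Icc (-1) 1))
    (hmono : ∀ i, StrictMonoOn (v i) (Set.Icc (-1) 1) ∨ StrictAntiOn (v i) (Set.Icc (-1) 1))
    (himage : ∀ i, v i '' Set.Icc (-1) 1 = Set.Icc (a i) (b i))
    (C₁ : ℝ)
    (hC : ∀ i, ∀ x ∈ Set.Icc (-1 : ℝ) 1,
      |iteratedDerivWithin 2 (v i) (Set.Icc (-1) 1) x| ≤
        C₁ * |derivWithin (v i) (Set.Icc (-1) 1) x|)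
    (g : ℝ → ℝ)
    (hg : ∀ i, ∀ x ∈ Set.Ioo (a i) (b i), g x ∈ Set.Icc (-1 : ℝ) 1 ∧ v i (g x) = x)
    (lam : ℝ) (hlam : 1 < lam)
    (hCE : ∀ x ∈ ⋃ i, Set.Ioo (a i) (b i),
      lam * Real.sqrt (1 - g x ^ 2) ≤ Real.sqrt (1 - x ^ 2) * |deriv g x|) :
    (∀ n : ℕ, 1 ≤ n → ∀ x : ℝ,
      (∀ m < n, g^[m] x ∈ ⋃ i, Set.Ioo (a i) (b i)) →
      (2 / Real.pi) * Real.exp (-Real.pi * C₁ * lam / (lam - 1)) * lam ^ n ≤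
        |deriv (g^[n]) x|) ∧
    ∃ n₀ : ℕ, ∀ n : ℕ, n₀ ≤ n → ∀ x : ℝ,
      (∀ m < n, g^[m] x ∈ ⋃ i, Set.Ioo (a i) (b i)) →
      1 < |deriv (g^[n]) x| :=
  C_expansion_implies_expansion_of_iterates_general a b ha hb v hreg hmono himage C₁ hC g hg lam
    hlam hCE
end

section
/- Let C₁ ≥ 0 and let v : [−1,1] → ℝ be C² with v'(x) ≠ 0 for all x and |v''(x)/v'(x)| ≤ C₁ for all x ∈ [−1,1]. Then for every x ∈ [−1,1]: e^{−2C₁} · |v(1) − v(−1)|/2 ≤ |v'(x)| ≤ (1 + 2C₁) · |v(1) − v(−1)|/2. -/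
/-!
Write `g = v'`. Since `|(log |g|)'| = |g''/g| ≤ C₁`, the function `log |g|` is
`C₁`-Lipschitz, so `|g|` varies by a factor at most `e^{2C₁}` on `[-1,1]`; comparing with a
mean value point `ξ`, where `|g ξ| = |v 1 - v (-1)|/2`, gives the lower bound. By Darboux `g`
has constant sign, say `g > 0`; then `C₁ v ± g` are monotone, so
`|g x - g ξ| ≤ C₁ |v 1 - v (-1)|`, which gives the upper bound.
-/

open Set Real

section

variable {s : Set ℝ} {a b C : ℝ} {f f' u u' : ℝ → ℝ}

theorem Convex.monotoneOn_of_forall_hasDerivWithinAt_nonneg (hs : Convex ℝ s)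
    (hf : ∀ x ∈ s, HasDerivWithinAt f (f' x) s x) (hf' : ∀ x ∈ s, 0 ≤ f' x) :
    MonotoneOn f s :=
  monotoneOn_of_hasDerivWithinAt_nonneg hs (fun x hx => (hf x hx).continuousWithinAt)
    (fun x hx => (hf x (interior_subset hx)).mono interior_subset)
    (fun x hx => hf' x (interior_subset hx))

theorem Convex.abs_sub_le_sub_of_abs_hasDerivWithinAt_le (hs : Convex ℝ s)
    (hf : ∀ x ∈ s, HasDerivWithinAt f (f' x) s x) (hu : ∀ x ∈ s, HasDerivWithinAt u (u' x) s x)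
    (hbound : ∀ x ∈ s, |f' x| ≤ u' x) {x y : ℝ} (hx : x ∈ s) (hy : y ∈ s) (hxy : x ≤ y) :
    |f y - f x| ≤ u y - u x := by
  have hsub : MonotoneOn (fun t => u t - f t) s :=
    hs.monotoneOn_of_forall_hasDerivWithinAt_nonneg (fun t ht => (hu t ht).sub (hf t ht))
      fun t ht => by linarith [le_abs_self (f' t), hbound t ht]
  have hadd : MonotoneOn (fun t => u t + f t) s :=
    hs.monotoneOn_of_forall_hasDerivWithinAt_nonneg (fun t ht => (hu t ht).add (hf t ht))
      fun t ht => by linarith [neg_abs_le (f' t), hbound t ht]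
  have h₁ := hsub hx hy hxy
  have h₂ := hadd hx hy hxy
  simp only at h₁ h₂
  exact abs_sub_le_iff.2 ⟨by linarith, by linarith⟩

theorem abs_sub_le_sub_of_abs_hasDerivWithinAt_le_Icc
    (hf : ∀ x ∈ Icc a b, HasDerivWithinAt f (f' x) (Icc a b) x)
    (hu : ∀ x ∈ Icc a b, HasDerivWithinAt u (u' x) (Icc a b) x)
    (hbound : ∀ x ∈ Icc a b, |f' x| ≤ u' x) {x y : ℝ} (hx : x ∈ Icc a b) (hy : y ∈ Icc a b) :
    |f y - f x| ≤ u b - u a := by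
  wlog hxy : x ≤ y generalizing x y
  · rw [abs_sub_comm]
    exact this hy hx (le_of_not_ge hxy)
  have hu_mono : MonotoneOn u (Icc a b) :=
    (convex_Icc a b).monotoneOn_of_forall_hasDerivWithinAt_nonneg hu
      (fun t ht => (abs_nonneg _).trans (hbound t ht))
  have ha : a ∈ Icc a b := left_mem_Icc.2 (hx.1.trans hx.2)
  have hb : b ∈ Icc a b := right_mem_Icc.2 (hx.1.trans hx.2)
  linarith [(convex_Icc a b).abs_sub_le_sub_of_abs_hasDerivWithinAt_le hf hu hbound hx hy hxy,
    hu_mono ha hx hx.1, hu_mono hy hb hy.2]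

/-- `log |f|` is `C`-Lipschitz. -/
theorem Convex.abs_le_exp_mul_abs_of_abs_hasDerivWithinAt_le (hs : Convex ℝ s)
    (hf : ∀ x ∈ s, HasDerivWithinAt f (f' x) s x) (hne : ∀ x ∈ s, f x ≠ 0)
    (hbound : ∀ x ∈ s, |f' x| ≤ C * |f x|) {x y : ℝ} (hx : x ∈ s) (hy : y ∈ s) :
    |f y| ≤ exp (C * |y - x|) * |f x| := by
  have hlog : ∀ z ∈ s, HasDerivWithinAt (fun t => log (f t)) (f' z / f z) s z :=
    fun z hz => (hf z hz).log (hne z hz)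
  have hlog_bound : ∀ z ∈ s, ‖f' z / f z‖ ≤ C := fun z hz => by
    rw [norm_eq_abs, abs_div, div_le_iff₀ (abs_pos.2 (hne z hz))]
    exact hbound z hz
  have hlip := norm_image_sub_le_of_norm_hasDerivWithin_le hlog hlog_bound hs hx hy
  rw [norm_eq_abs, norm_eq_abs] at hlip
  calc |f y| = exp (log (f y)) := by rw [← log_abs, exp_log (abs_pos.2 (hne y hy))]
    _ ≤ exp (C * |y - x| + log (f x)) :=
      exp_le_exp.2 (by linarith [le_abs_self (log (f y) - log (f x))])
    _ = exp (C * |y - x|) * |f x| := by rw [exp_add, ← log_abs, exp_log (abs_pos.2 (hne x hx))]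

variable {v v' v'' : ℝ → ℝ}

theorem exp_mul_slope_le_abs_deriv_le_slope_add_of_pos (hab : a < b) (hC : 0 ≤ C)
    (hv : ∀ x ∈ Icc a b, HasDerivWithinAt v (v' x) (Icc a b) x)
    (hv' : ∀ x ∈ Icc a b, HasDerivWithinAt v' (v'' x) (Icc a b) x)
    (hpos : ∀ x ∈ Icc a b, 0 < v' x) (hdist : ∀ x ∈ Icc a b, |v'' x| ≤ C * |v' x|)
    {x : ℝ} (hx : x ∈ Icc a b) :
    exp (-(C * (b - a))) * (|v b - v a| / (b - a)) ≤ |v' x| ∧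
      |v' x| ≤ |v b - v a| / (b - a) + C * |v b - v a| := by
  obtain ⟨ξ, hξ, hξ_slope⟩ := exists_hasDerivAt_eq_slope v v' hab
    (fun t ht => (hv t ht).continuousWithinAt)
    (fun t ht => (hv t (Ioo_subset_Icc_self ht)).hasDerivAt (Icc_mem_nhds ht.1 ht.2))
  have hξ' : ξ ∈ Icc a b := Ioo_subset_Icc_self hξ
  have hv_mono : MonotoneOn v (Icc a b) :=
    (convex_Icc a b).monotoneOn_of_forall_hasDerivWithinAt_nonneg hv (fun t ht => (hpos t ht).le)
  have hΔ : |v b - v a| = v b - v a :=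
    abs_of_nonneg (sub_nonneg.2 (hv_mono (left_mem_Icc.2 hab.le) (right_mem_Icc.2 hab.le) hab.le))
  have hslope : |v b - v a| / (b - a) = |v' ξ| := by
    rw [hΔ, ← hξ_slope, abs_of_pos (hpos ξ hξ')]
  rw [hslope]
  constructor
  · have hgrowth : |v' ξ| ≤ exp (C * (b - a)) * |v' x| := by
      refine ((convex_Icc a b).abs_le_exp_mul_abs_of_abs_hasDerivWithinAt_le hv'
        (fun t ht => (hpos t ht).ne') hdist hx hξ').trans ?_
      gcongr
      rw [← Real.dist_eq]
      exact Real.dist_le_of_mem_Icc hξ' hx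
    calc exp (-(C * (b - a))) * |v' ξ|
        ≤ exp (-(C * (b - a))) * (exp (C * (b - a)) * |v' x|) := by gcongr
      _ = |v' x| := by rw [← mul_assoc, ← exp_add, neg_add_cancel, exp_zero, one_mul]
  · have hosc : |v' x - v' ξ| ≤ C * v b - C * v a :=
      abs_sub_le_sub_of_abs_hasDerivWithinAt_le_Icc hv' (fun t ht => (hv t ht).const_mul C)
        (fun t ht => (hdist t ht).trans_eq (by rw [abs_of_pos (hpos t ht)])) hξ' hx
    calc |v' x| ≤ |v' ξ| + |v' x - v' ξ| := by
          linarith [abs_sub_abs_le_abs_sub (v' x) (v' ξ)]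
      _ ≤ |v' ξ| + C * |v b - v a| := by rw [hΔ, mul_sub]; gcongr

theorem exp_mul_slope_le_abs_deriv_le_slope_add (hab : a < b) (hC : 0 ≤ C)
    (hv : ∀ x ∈ Icc a b, HasDerivWithinAt v (v' x) (Icc a b) x)
    (hv' : ∀ x ∈ Icc a b, HasDerivWithinAt v' (v'' x) (Icc a b) x)
    (hne : ∀ x ∈ Icc a b, v' x ≠ 0) (hdist : ∀ x ∈ Icc a b, |v'' x| ≤ C * |v' x|)
    {x : ℝ} (hx : x ∈ Icc a b) :
    exp (-(C * (b - a))) * (|v b - v a| / (b - a)) ≤ |v' x| ∧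
      |v' x| ≤ |v b - v a| / (b - a) + C * |v b - v a| := by
  rcases hasDerivWithinAt_forall_lt_or_forall_gt_of_forall_ne (convex_Icc a b) hv hne
    with hneg | hpos
  · have h := exp_mul_slope_le_abs_deriv_le_slope_add_of_pos (v := -v) (v' := -v') (v'' := -v'')
      hab hC (fun t ht => (hv t ht).neg) (fun t ht => (hv' t ht).neg)
      (fun t ht => neg_pos.2 (hneg t ht)) (by simpa only [Pi.neg_apply, abs_neg] using hdist) hx
    rwa [Pi.neg_apply, Pi.neg_apply, Pi.neg_apply, abs_neg, neg_sub_neg, abs_sub_comm] at h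
  · exact exp_mul_slope_le_abs_deriv_le_slope_add_of_pos hab hC hv hv' hpos hdist hx

end

/-- If `v` is `C²` on `[-1,1]` with nonvanishing derivative and
distortion bound `|v''/v'| ≤ C₁`, then for all `x ∈ [-1,1]`,
`e^{-2C₁} |v(1) - v(-1)|/2 ≤ |v'(x)| ≤ (1 + 2C₁) |v(1) - v(-1)|/2`. -/
theorem distortion_derivative_bounds
    (C₁ : ℝ) (hC₁ : 0 ≤ C₁) (v : ℝ → ℝ)
    (hreg : ContDiffOn ℝ 2 v (Set.Icc (-1) 1))
    (hne : ∀ x ∈ Set.Icc (-1 : ℝ) 1, derivWithin v (Set.Icc (-1) 1) x ≠ 0)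
    (hdist : ∀ x ∈ Set.Icc (-1 : ℝ) 1,
      |iteratedDerivWithin 2 v (Set.Icc (-1) 1) x| ≤
        C₁ * |derivWithin v (Set.Icc (-1) 1) x|) :
    ∀ x ∈ Set.Icc (-1 : ℝ) 1,
      Real.exp (-2 * C₁) * |v 1 - v (-1)| / 2 ≤ |derivWithin v (Set.Icc (-1) 1) x| ∧
        |derivWithin v (Set.Icc (-1) 1) x| ≤ (1 + 2 * C₁) * |v 1 - v (-1)| / 2 := by
  intro x hx
  have hv : ∀ y ∈ Icc (-1 : ℝ) 1,
      HasDerivWithinAt v (derivWithin v (Icc (-1) 1) y) (Icc (-1) 1) y :=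
    fun y hy => (hreg.differentiableOn (by norm_num) y hy).hasDerivWithinAt
  have hv' : ∀ y ∈ Icc (-1 : ℝ) 1, HasDerivWithinAt (derivWithin v (Icc (-1) 1))
      (iteratedDerivWithin 2 v (Icc (-1) 1) y) (Icc (-1) 1) y := fun y hy => by
    rw [iteratedDerivWithin_succ', iteratedDerivWithin_one]
    exact ((hreg.derivWithin (uniqueDiffOn_Icc (by norm_num)) (by norm_num)).differentiableOn
      one_ne_zero y hy).hasDerivWithinAt
  obtain ⟨hlow, hup⟩ :=
    exp_mul_slope_le_abs_deriv_le_slope_add (by norm_num) hC₁ hv hv' hne hdist hx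
  rw [show (1 : ℝ) - -1 = 2 by norm_num] at hlow hup
  constructor
  · calc exp (-2 * C₁) * |v 1 - v (-1)| / 2 = exp (-(C₁ * 2)) * (|v 1 - v (-1)| / 2) := by
          ring_nf
      _ ≤ _ := hlow
  · exact hup.trans_eq (by ring)
end

section
/- Let Φ and Γ be countable index sets indexing the branches of two full-branch Markov maps f and g on [−1,1]: for φ ∈ Φ let v^f_φ : [−1,1] → [−1,1] be a C² strictly monotone map onto the closure of an open interval O^f_φ ⊂ (−1,1), the intervals O^f_φ being pairwise disjoint, with |( v^f_φ)''(x)/(v^f_φ)'(x)| ≤ C₁ for all x; for γ ∈ Γ let v^g_γ : [−1,1] → [−1,1] be a C¹ strictly monotone map onto the closure of an open interval O^g_γ ⊂ (−1,1), the intervals O^g_γ being pairwise disjoint, with |(v^g_γ)'(x)| ≤ 1/λ_g for all x, where λ_g > 0. Suppose both families satisfy a partition spacing bound: |O^f_φ| ≤ Ξ_f · dist(σ, O^f_φ) whenever σ ∈ {−1,1} is not in the closure of O^f_φ, and |O^g_γ| ≤ Ξ_g · dist(σ, O^g_γ) whenever σ ∈ {−1,1} is not in the closure of O^g_γ. Then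 the branch intervals of the composition, O_{φγ} := interior of v^f_φ(v^g_γ([−1,1])), satisfy: for every φ ∈ Φ, γ ∈ Γ and every σ ∈ {−1,1} not in the closure of O_{φγ}, |O_{φγ}| ≤ (1 + 2C₁) · max{ e^{2C₁} Ξ_g, Ξ_f/λ_g } · dist(σ, O_{φγ}). -/
/-!
Write `w = v^f_φ` and `[p, q] = v^g_γ [-1, 1]`, so that the composed branch interval is
`w [p, q]`. Since `|w''| ≤ C₁ |w'|`, a Grönwall argument shows that `|w'|` varies by at most a
factor `e^{2C₁}` on `[-1, 1]`, and integrating the lower bound `|w' y| ≥ M e^{-C₁ |y - ξ|}`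
around a maximum point `ξ` of `|w'|` gives `2M ≤ (1 + 2C₁) |O^f_φ|`, where `M = |w' ξ|`.
Always `|w [p, q]| ≤ M (q - p)`. If `σ ∉ closure O^f_φ ⊇ w [p, q]`, combine this with
`q - p ≤ 2/λ_g` and the spacing of `O^f_φ`. Otherwise `σ` is an endpoint of `O^f_φ`, so
`σ = w s` for an endpoint `s` of `[-1, 1]`; `w` expands distances from `s` by at least
`e^{-2C₁} M`, which transports the spacing of `[p, q]` from `s`.
-/

open Set Metric Real MeasureTheory

section

variable {w ρ ρ' : ℝ → ℝ} {C a b : ℝ}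

theorem exists_abs_sub_eq_abs_deriv_mul {x y : ℝ}
    (hw : ∀ t ∈ Icc a b, HasDerivWithinAt w (ρ t) (Icc a b) t) (hx : x ∈ Icc a b)
    (hy : y ∈ Icc a b) : ∃ c ∈ Icc a b, |w y - w x| = |ρ c| * |y - x| := by
  wlog hxy : x < y generalizing x y
  · rcases (not_lt.1 hxy).eq_or_lt with rfl | hyx
    · exact ⟨y, hy, by simp⟩
    · obtain ⟨c, hc, h⟩ := this hy hx hyx
      exact ⟨c, hc, by rw [abs_sub_comm, h, abs_sub_comm]⟩
  have hsub : Icc x y ⊆ Icc a b := Icc_subset_Icc hx.1 hy.2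
  obtain ⟨c, hc, hslope⟩ := exists_hasDerivAt_eq_slope w ρ hxy
    (fun t ht => (hw t (hsub ht)).continuousWithinAt.mono hsub)
    (fun t ht => (hw t (hsub (Ioo_subset_Icc_self ht))).hasDerivAt
      (Icc_mem_nhds (hx.1.trans_lt ht.1) (ht.2.trans_le hy.2)))
  refine ⟨c, hsub (Ioo_subset_Icc_self hc), ?_⟩
  rw [hslope, abs_div, div_mul_cancel₀ _ (abs_pos.2 (sub_ne_zero.2 hxy.ne')).ne']

theorem hasDerivWithinAt_sq_mul_exp {s : Set ℝ} {x : ℝ} (c : ℝ)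
    (h : HasDerivWithinAt ρ (ρ' x) s x) :
    HasDerivWithinAt (fun t => ρ t ^ 2 * exp (2 * c * t))
      (2 * exp (2 * c * x) * (ρ x * ρ' x + c * ρ x ^ 2)) s x := by
  have hexp : HasDerivAt (fun t => exp (2 * c * t)) (exp (2 * c * x) * (2 * c)) x := by
    simpa using ((hasDerivAt_id x).const_mul (2 * c)).exp
  exact ((h.fun_pow 2).fun_mul hexp.hasDerivWithinAt).congr_deriv (by norm_num; ring)

theorem abs_le_abs_mul_exp_of_abs_deriv_le_s17
    (hρ : ∀ t ∈ Icc a b, HasDerivWithinAt ρ (ρ' t) (Icc a b) t)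
    (hbound : ∀ t ∈ Icc a b, |ρ' t| ≤ C * |ρ t|) {x y : ℝ} (hx : x ∈ Icc a b)
    (hy : y ∈ Icc a b) : |ρ y| ≤ |ρ x| * exp (C * |y - x|) := by
  have hρ2 : ∀ t ∈ Icc a b, |ρ t * ρ' t| ≤ C * ρ t ^ 2 := fun t ht => by
    rw [abs_mul, ← sq_abs, sq]
    exact mul_le_mul_of_nonneg_left (hbound t ht) (abs_nonneg _) |>.trans_eq (by ring)
  -- `ρ² e^{2ct}` is antitone for `c = -C` and monotone for `c = C`; working with `ρ²` avoids
  -- dividing by `ρ`, which may vanish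
  have hderiv (c : ℝ) : ∀ t ∈ interior (Icc a b), HasDerivWithinAt
      (fun t => ρ t ^ 2 * exp (2 * c * t)) (2 * exp (2 * c * t) * (ρ t * ρ' t + c * ρ t ^ 2))
      (interior (Icc a b)) t := fun t ht =>
    (hasDerivWithinAt_sq_mul_exp c (hρ t (interior_subset ht))).mono interior_subset
  have hcont (c : ℝ) : ContinuousOn (fun t => ρ t ^ 2 * exp (2 * c * t)) (Icc a b) :=
    fun t ht => (hasDerivWithinAt_sq_mul_exp c (hρ t ht)).continuousWithinAt
  have bound_of_weighted_sq (c : ℝ) (hc : c * (x - y) = C * |y - x|)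
      (hF : ρ y ^ 2 * exp (2 * c * y) ≤ ρ x ^ 2 * exp (2 * c * x)) :
      |ρ y| ≤ |ρ x| * exp (C * |y - x|) := by
    rw [← sq_le_sq₀ (abs_nonneg _) (by positivity), sq_abs, ← hc, mul_pow, sq_abs,
      ← exp_nat_mul,
      show ((2 : ℕ) : ℝ) * (c * (x - y)) = 2 * c * x - 2 * c * y by push_cast; ring, exp_sub,
      mul_div_assoc', le_div_iff₀ (exp_pos _)]
    exact hF
  rcases le_total x y with hxy | hxy
  · refine bound_of_weighted_sq (-C) (by rw [abs_of_nonneg (sub_nonneg.2 hxy)]; ring) ?_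
    refine antitoneOn_of_hasDerivWithinAt_nonpos (convex_Icc a b) (hcont _) (hderiv _) ?_ hx hy hxy
    intro t ht
    have := (abs_le.1 (hρ2 t (interior_subset ht))).2
    have := exp_pos (2 * -C * t)
    nlinarith
  · refine bound_of_weighted_sq C (by rw [abs_of_nonpos (sub_nonpos.2 hxy)]; ring) ?_
    refine monotoneOn_of_hasDerivWithinAt_nonneg (convex_Icc a b) (hcont _) (hderiv _) ?_ hy hx hxy
    intro t ht
    have := (abs_le.1 (hρ2 t (interior_subset ht))).1
    have := exp_pos (2 * C * t)
    nlinarith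

theorem integral_exp_mul_sub {c : ℝ} (hc : c ≠ 0) (s t d : ℝ) :
    ∫ y in s..t, exp (c * y - d) = (exp (c * t - d) - exp (c * s - d)) / c := by
  rw [intervalIntegral.integral_comp_mul_sub (fun y => exp y) hc, integral_exp, smul_eq_mul,
    inv_mul_eq_div]

theorem div_one_add_mul_le_integral_exp_neg_mul_abs {ξ : ℝ} (hC : 0 ≤ C)
    (hξ : ξ ∈ Icc a b) :
    (b - a) / (1 + C * (b - a)) ≤ ∫ y in a..b, exp (-(C * |y - ξ|)) := by
  have hab : a ≤ b := hξ.1.trans hξ.2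
  rcases hC.eq_or_lt with rfl | hC
  · simp
  have hleft : ∫ y in a..ξ, exp (-(C * |y - ξ|)) = (1 - exp (C * a - C * ξ)) / C := by
    rw [intervalIntegral.integral_congr (g := fun y => exp (C * y - C * ξ)),
      integral_exp_mul_sub hC.ne', sub_self, exp_zero]
    intro y hy
    rw [uIcc_of_le hξ.1] at hy
    simp only [abs_of_nonpos (sub_nonpos.2 hy.2)]
    ring_nf
  have hright : ∫ y in ξ..b, exp (-(C * |y - ξ|)) = (1 - exp (C * ξ - C * b)) / C := by
    rw [intervalIntegral.integral_congr (g := fun y => exp (-C * y - -C * ξ)),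
      integral_exp_mul_sub (neg_ne_zero.2 hC.ne'), sub_self, exp_zero]
    · rw [div_neg, ← neg_div, neg_sub]; ring_nf
    intro y hy
    rw [uIcc_of_le hξ.2] at hy
    simp only [abs_of_nonneg (sub_nonneg.2 hy.1)]
    ring_nf
  have hint : ∀ s t, IntervalIntegrable (fun y => exp (-(C * |y - ξ|))) volume s t := fun s t =>
    (by fun_prop : Continuous fun y => exp (-(C * |y - ξ|))).intervalIntegrable s t
  rw [← intervalIntegral.integral_add_adjacent_intervals (hint a ξ) (hint ξ b), hleft, hright]
  -- with `u, v ≤ 1` the two exponentials, `u + v ≤ 1 + u v` and `u v = exp (-C (b - a))`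
  have hu : exp (C * a - C * ξ) ≤ 1 := exp_le_one_iff.2 (by nlinarith [hξ.1])
  have hv : exp (C * ξ - C * b) ≤ 1 := exp_le_one_iff.2 (by nlinarith [hξ.2])
  have huv : exp (C * a - C * ξ) * exp (C * ξ - C * b) * exp (C * (b - a)) = 1 := by
    rw [← exp_add, ← exp_add]; ring_nf; exact exp_zero
  have hexp : 1 + C * (b - a) ≤ exp (C * (b - a)) := by linarith [add_one_le_exp (C * (b - a))]
  rw [← add_div, div_le_div_iff₀ (by positivity) hC]
  nlinarith [mul_nonneg (mul_nonneg (sub_nonneg.2 hu) (sub_nonneg.2 hv))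
      (by positivity : (0 : ℝ) ≤ 1 + C * (b - a)),
    mul_nonneg (mul_pos (exp_pos (C * a - C * ξ)) (exp_pos (C * ξ - C * b))).le
      (sub_nonneg.2 hexp)]

theorem mul_le_one_add_mul_integral {ξ : ℝ} (hC : 0 ≤ C) (hξ : ξ ∈ Icc a b)
    (hρ : IntervalIntegrable ρ volume a b) (hρξ : 0 ≤ ρ ξ)
    (hlow : ∀ y ∈ Icc a b, ρ ξ * exp (-(C * |y - ξ|)) ≤ ρ y) :
    (b - a) * ρ ξ ≤ (1 + C * (b - a)) * ∫ y in a..b, ρ y := by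
  have hab : a ≤ b := hξ.1.trans hξ.2
  have hpos : 0 < 1 + C * (b - a) := by nlinarith
  calc (b - a) * ρ ξ = (1 + C * (b - a)) * ((b - a) / (1 + C * (b - a)) * ρ ξ) := by
        rw [div_mul_eq_mul_div, mul_div_cancel₀ _ hpos.ne']
    _ ≤ (1 + C * (b - a)) * ((∫ y in a..b, exp (-(C * |y - ξ|))) * ρ ξ) := by
        gcongr
        exact div_one_add_mul_le_integral_exp_neg_mul_abs hC hξ
    _ = (1 + C * (b - a)) * ∫ y in a..b, ρ ξ * exp (-(C * |y - ξ|)) := by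
        rw [intervalIntegral.integral_const_mul, mul_comm (∫ y in a..b, _)]
    _ ≤ (1 + C * (b - a)) * ∫ y in a..b, ρ y := by
        gcongr
        exact intervalIntegral.integral_mono_on hab
          ((by fun_prop : Continuous fun y => ρ ξ * exp (-(C * |y - ξ|))).intervalIntegrable a b)
          hρ hlow

theorem exists_bounds_of_abs_deriv_le_mul_abs (hC : 0 ≤ C)
    (hab : a ≤ b) (hρ : ∀ t ∈ Icc a b, HasDerivWithinAt ρ (ρ' t) (Icc a b) t)
    (hbound : ∀ t ∈ Icc a b, |ρ' t| ≤ C * |ρ t|) :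
    ∃ M, (∀ x ∈ Icc a b, |ρ x| ≤ M) ∧
      (∀ x ∈ Icc a b, M ≤ exp (C * (b - a)) * |ρ x|) ∧
      (b - a) * M ≤ (1 + C * (b - a)) * ∫ x in Icc a b, |ρ x| := by
  have hcont : ContinuousOn ρ (Icc a b) := fun t ht => (hρ t ht).continuousWithinAt
  obtain ⟨ξ, hξ, hmax⟩ := isCompact_Icc.exists_isMaxOn (nonempty_Icc.2 hab) hcont.abs
  have hcompare := fun {x y} => abs_le_abs_mul_exp_of_abs_deriv_le_s17 hρ hbound (x := x) (y := y)
  refine ⟨|ρ ξ|, fun x hx => hmax hx, fun x hx => ?_, ?_⟩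
  · calc |ρ ξ| ≤ |ρ x| * exp (C * |ξ - x|) := hcompare hx hξ
      _ ≤ |ρ x| * exp (C * (b - a)) := by
          gcongr
          exact abs_sub_le_iff.2 ⟨by linarith [hξ.2, hx.1], by linarith [hx.2, hξ.1]⟩
      _ = exp (C * (b - a)) * |ρ x| := mul_comm _ _
  · rw [integral_Icc_eq_integral_Ioc, ← intervalIntegral.integral_of_le hab]
    refine mul_le_one_add_mul_integral hC hξ (hcont.abs.intervalIntegrable_of_Icc hab)
      (abs_nonneg _) fun y hy => ?_
    rw [exp_neg, ← div_eq_mul_inv, div_le_iff₀ (exp_pos _), abs_sub_comm]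
    exact hcompare hy hξ

theorem measureReal_image_eq_integral_abs_deriv {s : Set ℝ} (hs : MeasurableSet s)
    (hw : ∀ x ∈ s, HasDerivWithinAt w (ρ x) s x) (hinj : InjOn w s) :
    volume.real (w '' s) = ∫ x in s, |ρ x| := by
  simpa using integral_image_eq_integral_abs_deriv_smul hs hw hinj fun _ => (1 : ℝ)

theorem measureReal_image_Icc_le {M : ℝ} (hab : a ≤ b)
    (hw : ∀ x ∈ Icc a b, HasDerivWithinAt w (ρ x) (Icc a b) x) (hinj : InjOn w (Icc a b))
    (hM : ∀ x ∈ Icc a b, |ρ x| ≤ M) : volume.real (w '' Icc a b) ≤ M * (b - a) := by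
  rw [measureReal_image_eq_integral_abs_deriv measurableSet_Icc hw hinj,
    ← Real.volume_real_Icc_of_le hab]
  refine (le_abs_self _).trans ?_
  refine norm_setIntegral_le_of_norm_le_const (f := fun x => |ρ x|) measure_Icc_lt_top
    fun x hx => ?_
  rw [Real.norm_eq_abs, abs_abs]
  exact hM x hx

theorem mapsTo_Ioo_of_strictMonoOn_or_strictAntiOn {c d : ℝ}
    (hw : StrictMonoOn w (Icc a b) ∨ StrictAntiOn w (Icc a b))
    (hmaps : MapsTo w (Icc a b) (Icc c d)) : MapsTo w (Ioo a b) (Ioo c d) := by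
  intro s hs
  have ha : a ∈ Icc a b := left_mem_Icc.2 (hs.1.trans hs.2).le
  have hb : b ∈ Icc a b := right_mem_Icc.2 (hs.1.trans hs.2).le
  have hs' := Ioo_subset_Icc_self hs
  rcases hw with hw | hw
  · exact ⟨(hmaps ha).1.trans_lt (hw ha hs' hs.1), (hw hs' hb hs.2).trans_le (hmaps hb).2⟩
  · exact ⟨(hmaps hb).1.trans_lt (hw hs' hb hs.2), (hw ha hs' hs.1).trans_le (hmaps ha).2⟩

theorem mem_pair_of_apply_mem_pair {c d s : ℝ}
    (hw : StrictMonoOn w (Icc a b) ∨ StrictAntiOn w (Icc a b))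
    (hmaps : MapsTo w (Icc a b) (Icc c d)) (hs : s ∈ Icc a b) (hws : w s ∈ ({c, d} : Set ℝ)) :
    s ∈ ({a, b} : Set ℝ) := by
  rw [← Icc_sdiff_Ioo_same (hs.1.trans hs.2)]
  refine ⟨hs, fun h => ?_⟩
  have := mapsTo_Ioo_of_strictMonoOn_or_strictAntiOn hw hmaps h
  obtain hws | hws : w s = c ∨ w s = d := hws <;> linarith [this.1, this.2]

theorem mul_infDist_le_mul_infDist_image {M K s : ℝ} {T : Set ℝ} (hK : 0 < K)
    (hw : ∀ t ∈ Icc a b, HasDerivWithinAt w (ρ t) (Icc a b) t)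
    (hM : ∀ x ∈ Icc a b, M ≤ K * |ρ x|) (hs : s ∈ Icc a b) (hT : T ⊆ Icc a b)
    (hTne : T.Nonempty) : M * infDist s T ≤ K * infDist (w s) (w '' T) := by
  rw [← div_le_iff₀' hK]
  refine (le_infDist (hTne.image w)).2 ?_
  rintro _ ⟨t, ht, rfl⟩
  obtain ⟨c, hc, hmvt⟩ := exists_abs_sub_eq_abs_deriv_mul hw (hT ht) hs
  rw [div_le_iff₀' hK, Real.dist_eq, hmvt, ← mul_assoc]
  exact mul_le_mul (hM c hc) ((infDist_le_dist_of_mem ht).trans_eq (Real.dist_eq _ _))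
    infDist_nonneg (by positivity)

theorem exists_image_Icc_eq_Icc {p q : ℝ} (hpq : p < q)
    (hcont : ContinuousOn w (Icc p q)) (hinj : InjOn w (Icc p q)) :
    ∃ c d, c < d ∧ w '' Icc p q = Icc c d := by
  have hK := hcont.image_Icc hpq.le
  have hp : w p ∈ w '' Icc p q := mem_image_of_mem w (left_mem_Icc.2 hpq.le)
  have hq : w q ∈ w '' Icc p q := mem_image_of_mem w (right_mem_Icc.2 hpq.le)
  refine ⟨_, _, lt_of_le_of_ne (nonempty_Icc.1 (hK ▸ ⟨_, hp⟩)) fun hcd => hpq.ne ?_, hK⟩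
  rw [hK, ← hcd, Icc_self] at hp hq
  exact hinj (left_mem_Icc.2 hpq.le) (right_mem_Icc.2 hpq.le) (hp.trans hq.symm)

end

theorem measureReal_image_le_mul_infDist {w ρ ρ' : ℝ → ℝ} {C lam Ξf Ξg A B p q σ : ℝ}
    (hC : 0 ≤ C) (hlam : 0 < lam)
    (hw : ∀ x ∈ Icc (-1 : ℝ) 1, HasDerivWithinAt w (ρ x) (Icc (-1) 1) x)
    (hρ : ∀ x ∈ Icc (-1 : ℝ) 1, HasDerivWithinAt ρ (ρ' x) (Icc (-1) 1) x)
    (hdist : ∀ x ∈ Icc (-1 : ℝ) 1, |ρ' x| ≤ C * |ρ x|)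
    (hmono : StrictMonoOn w (Icc (-1) 1) ∨ StrictAntiOn w (Icc (-1) 1))
    (him : w '' Icc (-1) 1 = Icc A B) (hA : -1 ≤ A) (hB : B ≤ 1) (hAB : A < B)
    (hspF : ∀ σ ∈ ({-1, 1} : Set ℝ), σ ∉ Icc A B → B - A ≤ Ξf * infDist σ (Ioo A B))
    (hp : -1 ≤ p) (hq : q ≤ 1) (hpq : p < q) (hlen : q - p ≤ 2 / lam)
    (hspG : ∀ σ ∈ ({-1, 1} : Set ℝ), σ ∉ Icc p q → q - p ≤ Ξg * infDist σ (Ioo p q))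
    (hσ : σ ∈ ({-1, 1} : Set ℝ)) (hσK : σ ∉ w '' Icc p q) :
    volume.real (w '' Icc p q) ≤
      (1 + 2 * C) * max (exp (2 * C) * Ξg) (Ξf / lam) * infDist σ (w '' Icc p q) := by
  have hS : Icc p q ⊆ Icc (-1) 1 := Icc_subset_Icc hp hq
  have hinj : InjOn w (Icc (-1) 1) := hmono.elim StrictMonoOn.injOn StrictAntiOn.injOn
  obtain ⟨M, hM, hMmin, hMavg⟩ :=
    exists_bounds_of_abs_deriv_le_mul_abs hC (by norm_num : (-1 : ℝ) ≤ 1) hρ hdist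
  simp only [show (1 : ℝ) - -1 = 2 by norm_num, mul_comm C 2] at hMmin hMavg
  have hK : volume.real (w '' Icc p q) ≤ M * (q - p) :=
    measureReal_image_Icc_le hpq.le (fun x hx => (hw x (hS hx)).mono hS) (hinj.mono hS)
      fun x hx => hM x (hS hx)
  have hKne : (w '' Icc p q).Nonempty := (nonempty_Icc.2 hpq.le).image w
  have hM0 : 0 ≤ M := (abs_nonneg _).trans (hM 0 (by norm_num))
  set D := infDist σ (w '' Icc p q)
  have hD : 0 ≤ D := infDist_nonneg
  by_cases hσAB : σ ∈ Icc A B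
  · obtain ⟨s, hs, rfl⟩ : σ ∈ w '' Icc (-1) 1 := him ▸ hσAB
    have hs' : s ∈ ({-1, 1} : Set ℝ) := mem_pair_of_apply_mem_pair hmono
      (fun x hx => Icc_subset_Icc hA hB (him ▸ mem_image_of_mem w hx)) hs hσ
    have hG := hspG s hs' fun h => hσK (mem_image_of_mem w h)
    rw [← infDist_closure, closure_Ioo hpq.ne] at hG
    have hΞg : 0 ≤ Ξg := (pos_of_mul_pos_left (by linarith) infDist_nonneg).le
    have hsK : M * infDist s (Icc p q) ≤ exp (2 * C) * D :=
      mul_infDist_le_mul_infDist_image (exp_pos _) hw hMmin hs hS (nonempty_Icc.2 hpq.le)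
    calc volume.real (w '' Icc p q) ≤ M * (q - p) := hK
      _ ≤ M * (Ξg * infDist s (Icc p q)) := by gcongr
      _ = Ξg * (M * infDist s (Icc p q)) := by ring
      _ ≤ Ξg * (exp (2 * C) * D) := by gcongr
      _ = exp (2 * C) * Ξg * D := by ring
      _ ≤ (1 + 2 * C) * max (exp (2 * C) * Ξg) (Ξf / lam) * D := by
          gcongr ?_ * D
          exact (le_max_left _ _).trans (le_mul_of_one_le_left
            ((mul_nonneg (exp_pos _).le hΞg).trans (le_max_left _ _)) (by linarith))
  · have hF := hspF σ hσ hσAB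
    rw [← infDist_closure, closure_Ioo hAB.ne] at hF
    have hΞf : 0 ≤ Ξf := (pos_of_mul_pos_left (by linarith) infDist_nonneg).le
    have hDAB : infDist σ (Icc A B) ≤ D :=
      infDist_le_infDist_of_subset (him ▸ image_mono hS) hKne
    have hBA : volume.real (Icc A B) = ∫ x in Icc (-1) 1, |ρ x| :=
      him ▸ measureReal_image_eq_integral_abs_deriv measurableSet_Icc hw hinj
    rw [Real.volume_real_Icc_of_le hAB.le] at hBA
    calc volume.real (w '' Icc p q) ≤ M * (q - p) := hK
      _ ≤ M * (2 / lam) := by gcongr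
      _ = 2 * M / lam := by ring
      _ ≤ (1 + 2 * C) * (B - A) / lam := by rw [hBA]; gcongr ?_ / _
      _ ≤ (1 + 2 * C) * (Ξf * D) / lam := by gcongr; exact hF.trans (by gcongr)
      _ = (1 + 2 * C) * (Ξf / lam) * D := by ring
      _ ≤ (1 + 2 * C) * max (exp (2 * C) * Ξg) (Ξf / lam) * D := by gcongr; exact le_max_right _ _

theorem partition_spacing_composition_general
    {Φ Γ : Type}
    (C₁ lamg Ξf Ξg : ℝ) (hC₁ : 0 ≤ C₁) (hlamg : 0 < lamg)
    (aF bF : Φ → ℝ) (haF : ∀ φ, -1 ≤ aF φ) (hbF : ∀ φ, bF φ ≤ 1) (habF : ∀ φ, aF φ < bF φ)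
    (aG bG : Γ → ℝ) (haG : ∀ γ, -1 ≤ aG γ) (hbG : ∀ γ, bG γ ≤ 1) (habG : ∀ γ, aG γ < bG γ)
    (vF : Φ → ℝ → ℝ) (vG : Γ → ℝ → ℝ)
    (hregF : ∀ φ, ContDiffOn ℝ 2 (vF φ) (Set.Icc (-1) 1))
    (hmonoF : ∀ φ, StrictMonoOn (vF φ) (Set.Icc (-1) 1) ∨ StrictAntiOn (vF φ) (Set.Icc (-1) 1))
    (himF : ∀ φ, vF φ '' Set.Icc (-1) 1 = Set.Icc (aF φ) (bF φ))
    (hdistF : ∀ φ, ∀ x ∈ Set.Icc (-1 : ℝ) 1,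
      |iteratedDerivWithin 2 (vF φ) (Set.Icc (-1) 1) x| ≤
        C₁ * |derivWithin (vF φ) (Set.Icc (-1) 1) x|)
    (hregG : ∀ γ, ContDiffOn ℝ 1 (vG γ) (Set.Icc (-1) 1))
    (hmonoG : ∀ γ, StrictMonoOn (vG γ) (Set.Icc (-1) 1) ∨ StrictAntiOn (vG γ) (Set.Icc (-1) 1))
    (himG : ∀ γ, vG γ '' Set.Icc (-1) 1 = Set.Icc (aG γ) (bG γ))
    (hderG : ∀ γ, ∀ x ∈ Set.Icc (-1 : ℝ) 1,
      |derivWithin (vG γ) (Set.Icc (-1) 1) x| ≤ 1 / lamg)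
    (hspF : ∀ φ, ∀ σ ∈ ({-1, 1} : Set ℝ), σ ∉ Set.Icc (aF φ) (bF φ) →
      bF φ - aF φ ≤ Ξf * Metric.infDist σ (Set.Ioo (aF φ) (bF φ)))
    (hspG : ∀ γ, ∀ σ ∈ ({-1, 1} : Set ℝ), σ ∉ Set.Icc (aG γ) (bG γ) →
      bG γ - aG γ ≤ Ξg * Metric.infDist σ (Set.Ioo (aG γ) (bG γ))) :
    ∀ (φ : Φ) (γ : Γ), ∀ σ ∈ ({-1, 1} : Set ℝ),
      σ ∉ closure (interior (vF φ '' (vG γ '' Set.Icc (-1 : ℝ) 1))) →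
      (MeasureTheory.volume (interior (vF φ '' (vG γ '' Set.Icc (-1 : ℝ) 1)))).toReal ≤
        (1 + 2 * C₁) * max (Real.exp (2 * C₁) * Ξg) (Ξf / lamg) *
          Metric.infDist σ (interior (vF φ '' (vG γ '' Set.Icc (-1 : ℝ) 1))) := by
  intro φ γ σ hσ hσK
  set ρ := derivWithin (vF φ) (Icc (-1) 1)
  have hderivF : ∀ x ∈ Icc (-1 : ℝ) 1, HasDerivWithinAt (vF φ) (ρ x) (Icc (-1) 1) x :=
    fun x hx => ((hregF φ).differentiableOn (by norm_num) x hx).hasDerivWithinAt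
  have hderiv2F : ∀ x ∈ Icc (-1 : ℝ) 1,
      HasDerivWithinAt ρ (derivWithin ρ (Icc (-1) 1) x) (Icc (-1) 1) x := fun x hx =>
    (((hregF φ).derivWithin (m := 1) (uniqueDiffOn_Icc (by norm_num)) (by norm_num))
      |>.differentiableOn one_ne_zero x hx).hasDerivWithinAt
  have hdist : ∀ x ∈ Icc (-1 : ℝ) 1, |derivWithin ρ (Icc (-1) 1) x| ≤ C₁ * |ρ x| := by
    simpa only [iteratedDerivWithin_succ, iteratedDerivWithin_zero] using hdistF φ
  have hlenG : bG γ - aG γ ≤ 2 / lamg := by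
    have := measureReal_image_Icc_le (by norm_num)
      (fun x hx => ((hregG γ).differentiableOn one_ne_zero x hx).hasDerivWithinAt)
      ((hmonoG γ).elim StrictMonoOn.injOn StrictAntiOn.injOn) (hderG γ)
    rwa [himG γ, Real.volume_real_Icc_of_le (habG γ).le, show (1 : ℝ) - -1 = 2 by norm_num,
      one_div_mul_eq_div] at this
  have hS : Icc (aG γ) (bG γ) ⊆ Icc (-1) 1 := Icc_subset_Icc (haG γ) (hbG γ)
  rw [himG γ] at hσK ⊢
  obtain ⟨c, d, hcd, hK⟩ := exists_image_Icc_eq_Icc (habG γ) ((hregF φ).continuousOn.mono hS)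
    (((hmonoF φ).elim StrictMonoOn.injOn StrictAntiOn.injOn).mono hS)
  have key := measureReal_image_le_mul_infDist hC₁ hlamg hderivF hderiv2F hdist (hmonoF φ)
    (himF φ) (haF φ) (hbF φ) (habF φ) (hspF φ) (haG γ) (hbG γ) (habG γ) hlenG (hspG γ) hσ
    (by rwa [hK, interior_Icc, closure_Ioo hcd.ne, ← hK] at hσK)
  rwa [hK, interior_Icc, ← infDist_closure, closure_Ioo hcd.ne, Real.volume_Ioo,
    ← Real.volume_Icc, ← measureReal_def, ← hK]

/-- The partition spacing condition (P) is preserved under composition: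
if the inverse branches `v^f_φ` of `f` have distortion bound `C₁` and spacing constant
`Ξ_f`, and the inverse branches `v^g_γ` of `g` satisfy `|(v^g_γ)'| ≤ 1/λ_g` and spacing
constant `Ξ_g`, then the branch intervals `O_{φγ} = interior (v^f_φ(v^g_γ([-1,1])))` of the
composition satisfy the spacing bound with constant
`(1 + 2C₁) max(e^{2C₁} Ξ_g, Ξ_f/λ_g)`. -/
theorem partition_spacing_composition
    {Φ Γ : Type} [Countable Φ] [Countable Γ]
    (C₁ lamg Ξf Ξg : ℝ) (hC₁ : 0 ≤ C₁) (hlamg : 0 < lamg)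
    (aF bF : Φ → ℝ) (haF : ∀ φ, -1 ≤ aF φ) (hbF : ∀ φ, bF φ ≤ 1) (habF : ∀ φ, aF φ < bF φ)
    (hdisjF : ∀ φ φ', φ ≠ φ' → Disjoint (Set.Ioo (aF φ) (bF φ)) (Set.Ioo (aF φ') (bF φ')))
    (aG bG : Γ → ℝ) (haG : ∀ γ, -1 ≤ aG γ) (hbG : ∀ γ, bG γ ≤ 1) (habG : ∀ γ, aG γ < bG γ)
    (hdisjG : ∀ γ γ', γ ≠ γ' → Disjoint (Set.Ioo (aG γ) (bG γ)) (Set.Ioo (aG γ') (bG γ')))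
    (vF : Φ → ℝ → ℝ) (vG : Γ → ℝ → ℝ)
    (hregF : ∀ φ, ContDiffOn ℝ 2 (vF φ) (Set.Icc (-1) 1))
    (hmonoF : ∀ φ, StrictMonoOn (vF φ) (Set.Icc (-1) 1) ∨ StrictAntiOn (vF φ) (Set.Icc (-1) 1))
    (himF : ∀ φ, vF φ '' Set.Icc (-1) 1 = Set.Icc (aF φ) (bF φ))
    (hdistF : ∀ φ, ∀ x ∈ Set.Icc (-1 : ℝ) 1,
      |iteratedDerivWithin 2 (vF φ) (Set.Icc (-1) 1) x| ≤
        C₁ * |derivWithin (vF φ) (Set.Icc (-1) 1) x|)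
    (hregG : ∀ γ, ContDiffOn ℝ 1 (vG γ) (Set.Icc (-1) 1))
    (hmonoG : ∀ γ, StrictMonoOn (vG γ) (Set.Icc (-1) 1) ∨ StrictAntiOn (vG γ) (Set.Icc (-1) 1))
    (himG : ∀ γ, vG γ '' Set.Icc (-1) 1 = Set.Icc (aG γ) (bG γ))
    (hderG : ∀ γ, ∀ x ∈ Set.Icc (-1 : ℝ) 1,
      |derivWithin (vG γ) (Set.Icc (-1) 1) x| ≤ 1 / lamg)
    (hspF : ∀ φ, ∀ σ ∈ ({-1, 1} : Set ℝ), σ ∉ Set.Icc (aF φ) (bF φ) →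
      bF φ - aF φ ≤ Ξf * Metric.infDist σ (Set.Ioo (aF φ) (bF φ)))
    (hspG : ∀ γ, ∀ σ ∈ ({-1, 1} : Set ℝ), σ ∉ Set.Icc (aG γ) (bG γ) →
      bG γ - aG γ ≤ Ξg * Metric.infDist σ (Set.Ioo (aG γ) (bG γ))) :
    ∀ (φ : Φ) (γ : Γ), ∀ σ ∈ ({-1, 1} : Set ℝ),
      σ ∉ closure (interior (vF φ '' (vG γ '' Set.Icc (-1 : ℝ) 1))) →
      (MeasureTheory.volume (interior (vF φ '' (vG γ '' Set.Icc (-1 : ℝ) 1)))).toReal ≤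
        (1 + 2 * C₁) * max (Real.exp (2 * C₁) * Ξg) (Ξf / lamg) *
          Metric.infDist σ (interior (vF φ '' (vG γ '' Set.Icc (-1 : ℝ) 1))) :=
  partition_spacing_composition_general C₁ lamg Ξf Ξg hC₁ hlamg aF bF haF hbF habF aG bG haG hbG
    habG vF vG hregF hmonoF himF hdistF hregG hmonoG himG hderG hspF hspG
end

section
/- Let n ∈ ℕ, let σ ∈ {−1,1}, and let v : [−1,1] → ℝ be C^{n+1}. Set τ = v(σ) and define Ŝ(x) = (τ − v(x))/(σ − x) for x ∈ [−1,1] with x ≠ σ. Then for every x ∈ [−1,1] with x ≠ σ there exists w strictly between x and σ such that Ŝ^{(n)}(x) = v^{(n+1)}(w)/(n+1). -/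
/-!
By induction on `n`, the `n`-th derivative of the chord slope `Ŝ` at `x` is
`n! (v σ - Tₙ(x; σ)) / (σ - x)^(n+1)`, where `Tₙ(x; ·)` is the Taylor polynomial of `v` of
degree `n` centred at `x`: differentiating in the centre `x` telescopes the Taylor polynomial to
the single term `(σ - x)^n v^(n+1)(x) / n!`. The Lagrange form of the remainder of the expansion
at `x`, evaluated at `σ`, then turns the numerator into `v^(n+1)(w) (σ - x)^(n+1) / (n+1)!`.
-/

open Set
open scoped Nat Topology

theorem iteratedDerivWithin_subset {𝕜 F : Type*} [NontriviallyNormedField 𝕜]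
    [NormedAddCommGroup F] [NormedSpace 𝕜 F] {s t : Set 𝕜} {f : 𝕜 → F} {n : ℕ} {x : 𝕜}
    (st : s ⊆ t) (hs : UniqueDiffOn 𝕜 s) (ht : UniqueDiffOn 𝕜 t) (hf : ContDiffOn 𝕜 n f t)
    (hx : x ∈ s) : iteratedDerivWithin n f s x = iteratedDerivWithin n f t x := by
  simp only [iteratedDerivWithin_eq_iteratedFDerivWithin,
    iteratedFDerivWithin_subset st hs ht hf hx]

theorem taylorWithinEval_subset {E : Type*} [NormedAddCommGroup E] [NormedSpace ℝ E]
    {s t : Set ℝ} {f : ℝ → E} {n : ℕ} {x₀ : ℝ} (st : s ⊆ t) (hs : UniqueDiffOn ℝ s)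
    (ht : UniqueDiffOn ℝ t) (hf : ContDiffOn ℝ n f t) (hx₀ : x₀ ∈ s) (x : ℝ) :
    taylorWithinEval f n s x₀ x = taylorWithinEval f n t x₀ x := by
  simp only [taylor_within_apply]
  refine Finset.sum_congr rfl fun k hk => ?_
  rw [iteratedDerivWithin_subset st hs ht
    (hf.of_le (mod_cast Finset.mem_range_succ_iff.mp hk)) hx₀]

theorem iteratedDerivWithin_chord_slope {s : Set ℝ} (hs : UniqueDiffOn ℝ s) {σ : ℝ}
    {v : ℝ → ℝ} {n : ℕ} (hv : ContDiffOn ℝ n v s) {x : ℝ} (hx : x ∈ s \ {σ}) :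
    iteratedDerivWithin n (fun y => (v σ - v y) / (σ - y)) (s \ {σ}) x =
      n ! * (v σ - taylorWithinEval v n s x σ) / (σ - x) ^ (n + 1) := by
  induction n generalizing x with
  | zero => simp
  | succ n ih =>
    have hσx : σ - x ≠ 0 := sub_ne_zero.mpr (Ne.symm hx.2)
    have hnhds : s \ {σ} ∈ 𝓝[s] x :=
      inter_mem_nhdsWithin s (isOpen_compl_singleton.mem_nhds hx.2)
    have hD : DifferentiableWithinAt ℝ (iteratedDerivWithin n v s) s x :=
      hv.differentiableOn_iteratedDerivWithin (mod_cast n.lt_succ_self) hs x hx.1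
    have htaylor :=
      hasDerivWithinAt_taylorWithinEval (x := σ) hs hnhds hx sdiff_subset hv.of_succ hD
    have hquot := ((htaylor.const_sub (v σ)).const_mul (n ! : ℝ)).fun_div
      (monomial_has_deriv_aux x σ n).hasDerivWithinAt (pow_ne_zero _ hσx)
    rw [iteratedDerivWithin_succ,
      derivWithin_congr (fun y hy => ih hv.of_succ hy) (ih hv.of_succ hx),
      hquot.derivWithin ((hs x hx.1).mono_nhds (nhdsWithin_le_iff.mpr hnhds)),
      taylorWithinEval_succ]
    simp only [smul_eq_mul, Nat.factorial_succ]
    push_cast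
    field_simp
    ring

/-- Mean-value identity for the chord slope: if `v` is `C^{n+1}` on
`[-1,1]`, `σ = ±1`, `Ŝ(x) = (v(σ) - v(x))/(σ - x)`, then for every `x ∈ [-1,1]` with
`x ≠ σ` there is `w` strictly between `x` and `σ` with `Ŝ^{(n)}(x) = v^{(n+1)}(w)/(n+1)`. -/
theorem chord_slope_mean_value
    (n : ℕ) (σ : ℝ) (hσ : σ = -1 ∨ σ = 1) (v : ℝ → ℝ)
    (hv : ContDiffOn ℝ (n + 1 : ℕ) v (Set.Icc (-1) 1)) :
    ∀ x ∈ Set.Icc (-1 : ℝ) 1, x ≠ σ →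
      ∃ w ∈ Set.Ioo (min x σ) (max x σ),
        iteratedDerivWithin n (fun y => (v σ - v y) / (σ - y))
            (Set.Icc (-1) 1 \ {σ}) x =
          iteratedDerivWithin (n + 1) v (Set.Icc (-1) 1) w / (n + 1) := by
  intro x hx hxσ
  have hσI : σ ∈ Icc (-1 : ℝ) 1 := by rcases hσ with rfl | rfl <;> norm_num
  have hI : UniqueDiffOn ℝ (Icc (-1 : ℝ) 1) := uniqueDiffOn_Icc (by norm_num)
  have hsub : uIcc x σ ⊆ Icc (-1) 1 := uIcc_subset_Icc hx hσI
  obtain ⟨w, hw, hremainder⟩ :=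
    taylor_mean_remainder_lagrange_iteratedDeriv hxσ (hv.mono hsub)
  have hwI : w ∈ Ioo (-1 : ℝ) 1 :=
    ⟨(le_min hx.1 hσI.1).trans_lt hw.1, hw.2.trans_le (max_le hx.2 hσI.2)⟩
  refine ⟨w, hw, ?_⟩
  rw [iteratedDerivWithin_chord_slope hI hv.of_succ ⟨hx, hxσ⟩,
    ← taylorWithinEval_subset hsub (uniqueDiffOn_uIcc hxσ) hI hv.of_succ left_mem_uIcc,
    hremainder, iteratedDerivWithin_eq_iteratedDeriv hI
      (hv.contDiffAt (Icc_mem_nhds hwI.1 hwI.2)) (Ioo_subset_Icc_self hwI)]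
  have hσx : σ - x ≠ 0 := sub_ne_zero.mpr (Ne.symm hxσ)
  rw [Nat.factorial_succ]
  push_cast
  field_simp
end
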